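/- arXiv:2005.01133 — 11 statements merged into one kernel-verified Lean document; each statement's English description precedes it below -/
import Mathlib

section
/- Let κ₁, κ₂ ∈ ℂ∖{0} and ε₁, ε₂, φ₁, φ₂ ∈ ℂ with ε₁φ₂ + κ₂ ≠ 0. Define κ₄ = ε₁φ₂ + κ₂, φ₄ = κ₁φ₂, κ₃ = κ₁κ₂/(ε₁φ₂ + κ₂), ε₃ = ε₁/(ε₁φ₂ + κ₂), ε₄ = (ε₁κ₂² + ε₂κ₂ + (ε₁²κ₂ + ε₁ε₂)φ₂ − ε₁)/(κ₁κ₂), and φ₃ = (κ₂²φ₁ + ε₁φ₂² + (ε₁κ₂φ₁ − (κ₁² − 1)κ₂)φ₂)/(ε₁φ₂ + κ₂). Then κ₃ ≠ 0 and κ₄ ≠ 0, and the SL₂(ℂ)*-elements a₁, a₂, a₃, a₄ with parameters (κᵢ, εᵢ, φᵢ) satisfy the biquandle equations a₁⁺a₂⁺ = a₄⁺a₃⁺, a₁⁻a₂⁻ = a₄⁻a₃⁻, and a₁⁻a₂⁺ = a₄⁺a₃⁻. -/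
/-!
All matrices involved are triangular, so each biquandle equation reduces to a few scalar
identities between the entries of the two sides, which become polynomial identities once the
common denominator `κ₄ = ε₁φ₂ + κ₂` is cleared.
-/

section SL2StarProducts

variable {R : Type*} [CommRing R]

theorem plus_mul_plus (κ φ κ' φ' : R) :
    !![κ, 0; φ, 1] * !![κ', 0; φ', 1] = !![κ * κ', 0; φ * κ' + φ', 1] := by
  simp

theorem minus_mul_minus (ε κ ε' κ' : R) :
    !![1, ε; 0, κ] * !![1, ε'; 0, κ'] = !![1, ε' + ε * κ'; 0, κ * κ'] := by
  simp

theorem minus_mul_plus (ε κ κ' φ' : R) :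
    !![1, ε; 0, κ] * !![κ', 0; φ', 1] = !![κ' + ε * φ', ε; κ * φ', κ] := by
  simp

theorem plus_mul_minus (κ φ ε' κ' : R) :
    !![κ, 0; φ, 1] * !![1, ε'; 0, κ'] = !![κ, κ * ε'; φ, φ * ε' + κ'] := by
  simp

end SL2StarProducts

/-- The biquandle braiding formulas in `SL₂(ℂ)*`-coordinates: given admissible colors
`a₁, a₂` (i.e. `ε₁φ₂ + κ₂ ≠ 0`), the elements `a₄, a₃` defined by the stated formulas are
genuine `SL₂(ℂ)*`-elements (`κ₃, κ₄ ≠ 0`) and satisfy the biquandle equations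
`a₁⁺a₂⁺ = a₄⁺a₃⁺`, `a₁⁻a₂⁻ = a₄⁻a₃⁻`, `a₁⁻a₂⁺ = a₄⁺a₃⁻`, where the `SL₂(ℂ)*`-element
with parameters `(κ, ε, φ)` is the pair `a⁺ = [[κ,0],[φ,1]]`, `a⁻ = [[1,ε],[0,κ]]`. -/
theorem stmt1 (κ₁ κ₂ ε₁ ε₂ φ₁ φ₂ : ℂ) (hκ₁ : κ₁ ≠ 0) (hκ₂ : κ₂ ≠ 0)
    (h : ε₁ * φ₂ + κ₂ ≠ 0)
    (κ₄ φ₄ κ₃ ε₃ ε₄ φ₃ : ℂ)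
    (hκ₄ : κ₄ = ε₁ * φ₂ + κ₂)
    (hφ₄ : φ₄ = κ₁ * φ₂)
    (hκ₃ : κ₃ = κ₁ * κ₂ / (ε₁ * φ₂ + κ₂))
    (hε₃ : ε₃ = ε₁ / (ε₁ * φ₂ + κ₂))
    (hε₄ : ε₄ = (ε₁ * κ₂ ^ 2 + ε₂ * κ₂ + (ε₁ ^ 2 * κ₂ + ε₁ * ε₂) * φ₂ - ε₁) / (κ₁ * κ₂))
    (hφ₃ : φ₃ = (κ₂ ^ 2 * φ₁ + ε₁ * φ₂ ^ 2 + (ε₁ * κ₂ * φ₁ - (κ₁ ^ 2 - 1) * κ₂) * φ₂) /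
      (ε₁ * φ₂ + κ₂)) :
    κ₃ ≠ 0 ∧ κ₄ ≠ 0 ∧
    !![κ₁, 0; φ₁, 1] * !![κ₂, 0; φ₂, 1] = !![κ₄, 0; φ₄, 1] * !![κ₃, 0; φ₃, 1] ∧
    !![(1 : ℂ), ε₁; 0, κ₁] * !![(1 : ℂ), ε₂; 0, κ₂] =
      !![(1 : ℂ), ε₄; 0, κ₄] * !![(1 : ℂ), ε₃; 0, κ₃] ∧
    !![(1 : ℂ), ε₁; 0, κ₁] * !![κ₂, 0; φ₂, 1] = !![κ₄, 0; φ₄, 1] * !![(1 : ℂ), ε₃; 0, κ₃] := by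
  subst hκ₄ hφ₄
  have hκ : (ε₁ * φ₂ + κ₂) * κ₃ = κ₁ * κ₂ := by rw [hκ₃]; field_simp
  have hε : (ε₁ * φ₂ + κ₂) * ε₃ = ε₁ := by rw [hε₃]; field_simp
  have hφ : κ₁ * φ₂ * κ₃ + φ₃ = φ₁ * κ₂ + φ₂ := by
    rw [hκ₃, hφ₃, mul_div_assoc', ← add_div, div_eq_iff h]; ring
  have hε' : ε₃ + ε₄ * κ₃ = ε₂ + ε₁ * κ₂ := by rw [hε₃, hε₄, hκ₃]; field_simp; ring
  have hκ' : κ₁ * φ₂ * ε₃ + κ₃ = κ₁ := by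
    rw [hε₃, hκ₃, mul_div_assoc', ← add_div, div_eq_iff h]; ring
  refine ⟨hκ₃ ▸ div_ne_zero (mul_ne_zero hκ₁ hκ₂) h, h, ?_, ?_, ?_⟩
  · rw [plus_mul_plus, plus_mul_plus, hκ, hφ]
  · rw [minus_mul_minus, minus_mul_minus, hκ, hε']
  · rw [minus_mul_plus, plus_mul_minus, hε, hκ', add_comm κ₂]
end

section
/- Let a₁, a₂ be SL₂(ℂ)*-elements with parameters (κ₁, ε₁, φ₁) and (κ₂, ε₂, φ₂). If there exists a pair (a₄, a₃) of SL₂(ℂ)*-elements satisfying the biquandle equations a₁⁺a₂⁺ = a₄⁺a₃⁺, a₁⁻a₂⁻ = a₄⁻a₃⁻, a₁⁻a₂⁺ = a₄⁺a₃⁻, then necessarily ε₁φ₂ + κ₂ ≠ 0; moreover the pair (a₄, a₃) is unique: any two pairs of SL₂(ℂ)*-elements satisfying these three equations for the given (a₁, a₂) are equal. -/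
/-- `BiquandleSol κ₁ ε₁ φ₁ κ₂ ε₂ φ₂ κ₄ ε₄ φ₄ κ₃ ε₃ φ₃` says that the `SL₂(ℂ)*`-elements
`a₄, a₃` with parameters `(κ₄, ε₄, φ₄)` and `(κ₃, ε₃, φ₃)` (so `κ₄, κ₃ ≠ 0`) solve the
biquandle equations `a₁⁺a₂⁺ = a₄⁺a₃⁺`, `a₁⁻a₂⁻ = a₄⁻a₃⁻`, `a₁⁻a₂⁺ = a₄⁺a₃⁻` for the
`SL₂(ℂ)*`-elements `a₁, a₂` with parameters `(κ₁, ε₁, φ₁)`, `(κ₂, ε₂, φ₂)`, where the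
`SL₂(ℂ)*`-element with parameters `(κ, ε, φ)` is `a⁺ = [[κ,0],[φ,1]]`, `a⁻ = [[1,ε],[0,κ]]`. -/
def BiquandleSol (κ₁ ε₁ φ₁ κ₂ ε₂ φ₂ κ₄ ε₄ φ₄ κ₃ ε₃ φ₃ : ℂ) : Prop :=
  κ₄ ≠ 0 ∧ κ₃ ≠ 0 ∧
  !![κ₁, 0; φ₁, 1] * !![κ₂, 0; φ₂, 1] = !![κ₄, 0; φ₄, 1] * !![κ₃, 0; φ₃, 1] ∧
  !![(1 : ℂ), ε₁; 0, κ₁] * !![(1 : ℂ), ε₂; 0, κ₂] =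
    !![(1 : ℂ), ε₄; 0, κ₄] * !![(1 : ℂ), ε₃; 0, κ₃] ∧
  !![(1 : ℂ), ε₁; 0, κ₁] * !![κ₂, 0; φ₂, 1] = !![κ₄, 0; φ₄, 1] * !![(1 : ℂ), ε₃; 0, κ₃]

lemma scalarEqs {κ₁ ε₁ φ₁ κ₂ ε₂ φ₂ κ₄ ε₄ φ₄ κ₃ ε₃ φ₃ : ℂ}
    (h : BiquandleSol κ₁ ε₁ φ₁ κ₂ ε₂ φ₂ κ₄ ε₄ φ₄ κ₃ ε₃ φ₃) :
    κ₄ ≠ 0 ∧ κ₃ ≠ 0 ∧ κ₄ * κ₃ = κ₁ * κ₂ ∧ φ₄ * κ₃ + φ₃ = φ₁ * κ₂ + φ₂ ∧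
    ε₃ + ε₄ * κ₃ = ε₂ + ε₁ * κ₂ ∧
    κ₄ = κ₂ + ε₁ * φ₂ ∧ κ₄ * ε₃ = ε₁ ∧ φ₄ = κ₁ * φ₂ ∧ ε₃ * φ₄ + κ₃ = κ₁ := by
  obtain ⟨h4, h3, e1, e2, e3⟩ := h
  rw [← Matrix.ext_iff] at e1 e2 e3
  simp [Fin.forall_fin_two, Matrix.mul_apply, Fin.sum_univ_two] at e1 e2 e3
  refine ⟨h4, h3, ?_, ?_, ?_, ?_, ?_, ?_, ?_⟩
  · linear_combination -e1.1
  · linear_combination -e1.2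
  · linear_combination -e2.1
  · linear_combination -e3.1.1
  · linear_combination -e3.1.2
  · linear_combination -e3.2.1
  · linear_combination -e3.2.2

/-- If the biquandle equations for `(a₁, a₂)` admit a solution `(a₄, a₃)` by
`SL₂(ℂ)*`-elements, then necessarily `ε₁φ₂ + κ₂ ≠ 0`; moreover the solution is unique. -/
theorem stmt2 (κ₁ κ₂ ε₁ ε₂ φ₁ φ₂ : ℂ) (hκ₁ : κ₁ ≠ 0) (hκ₂ : κ₂ ≠ 0) :
    ((∃ κ₄ ε₄ φ₄ κ₃ ε₃ φ₃ : ℂ, BiquandleSol κ₁ ε₁ φ₁ κ₂ ε₂ φ₂ κ₄ ε₄ φ₄ κ₃ ε₃ φ₃) →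
      ε₁ * φ₂ + κ₂ ≠ 0) ∧
    (∀ κ₄ ε₄ φ₄ κ₃ ε₃ φ₃ κ₄' ε₄' φ₄' κ₃' ε₃' φ₃' : ℂ,
      BiquandleSol κ₁ ε₁ φ₁ κ₂ ε₂ φ₂ κ₄ ε₄ φ₄ κ₃ ε₃ φ₃ →
      BiquandleSol κ₁ ε₁ φ₁ κ₂ ε₂ φ₂ κ₄' ε₄' φ₄' κ₃' ε₃' φ₃' →
      κ₄ = κ₄' ∧ ε₄ = ε₄' ∧ φ₄ = φ₄' ∧ κ₃ = κ₃' ∧ ε₃ = ε₃' ∧ φ₃ = φ₃') := by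
  constructor
  · rintro ⟨κ₄, ε₄, φ₄, κ₃, ε₃, φ₃, h⟩
    obtain ⟨h4, h3, _, _, _, hk4, _⟩ := scalarEqs h
    intro hc
    exact h4 (by linear_combination hk4 + hc)
  · intro κ₄ ε₄ φ₄ κ₃ ε₃ φ₃ κ₄' ε₄' φ₄' κ₃' ε₃' φ₃' h h'
    obtain ⟨h4, h3, e1, e2, e3, e4, e5, e6, e7⟩ := scalarEqs h
    obtain ⟨h4', h3', e1', e2', e3', e4', e5', e6', e7'⟩ := scalarEqs h'
    have hkk : κ₄ = κ₄' := by rw [e4, e4']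
    have hpp : φ₄ = φ₄' := by rw [e6, e6']
    have hee : ε₃ = ε₃' := by
      apply mul_left_cancel₀ h4
      rw [e5, hkk, e5']
    have hk3 : κ₃ = κ₃' := by linear_combination e7 - e7' - ε₃ * hpp - φ₄' * hee
    have he4 : ε₄ = ε₄' := by
      apply mul_right_cancel₀ h3
      linear_combination e3 - e3' - hee - ε₄' * hk3
    have hp3 : φ₃ = φ₃' := by linear_combination e2 - e2' - κ₃ * hpp - φ₄' * hk3
    exact ⟨hkk, he4, hpp, hk3, hee, hp3⟩
end

section
/- Let a₁⁺, a₁⁻, a₂⁺, a₂⁻, a₃⁺, a₃⁻, a₄⁺, a₄⁻ be invertible 2×2 complex matrices satisfying a₁⁺a₂⁺ = a₄⁺a₃⁺, a₁⁻a₂⁻ = a₄⁻a₃⁻, and a₁⁻a₂⁺ = a₄⁺a₃⁻. Set g₁ = a₁⁺(a₁⁻)⁻¹, g₂ = a₁⁺a₂⁺(a₂⁻)⁻¹(a₁⁺)⁻¹, g₄ = a₄⁺(a₄⁻)⁻¹, and g₃ = a₄⁺a₃⁺(a₃⁻)⁻¹(a₄⁺)⁻¹. Then g₄ = g₁⁻¹g₂g₁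 and g₃ = g₁; that is, the factorization map intertwines the SL₂(ℂ)*-biquandle braiding with the standard colored braid action (g₁, g₂) ↦ (g₁⁻¹g₂g₁, g₁). -/
/-- The factorization map intertwines the `SL₂(ℂ)*`-biquandle braiding with the standard
colored braid action `(g₁, g₂) ↦ (g₁⁻¹g₂g₁, g₁)`: if invertible matrices satisfy the
biquandle equations `a₁⁺a₂⁺ = a₄⁺a₃⁺`, `a₁⁻a₂⁻ = a₄⁻a₃⁻`, `a₁⁻a₂⁺ = a₄⁺a₃⁻`, then
`g₄ = g₁⁻¹g₂g₁` and `g₃ = g₁`, where `g₁ = a₁⁺(a₁⁻)⁻¹`, `g₂ = a₁⁺a₂⁺(a₂⁻)⁻¹(a₁⁺)⁻¹`,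
`g₄ = a₄⁺(a₄⁻)⁻¹`, `g₃ = a₄⁺a₃⁺(a₃⁻)⁻¹(a₄⁺)⁻¹`. -/
theorem stmt3 (a₁p a₁m a₂p a₂m a₃p a₃m a₄p a₄m : GL (Fin 2) ℂ)
    (h1 : a₁p * a₂p = a₄p * a₃p)
    (h2 : a₁m * a₂m = a₄m * a₃m)
    (h3 : a₁m * a₂p = a₄p * a₃m) :
    a₄p * a₄m⁻¹ =
      (a₁p * a₁m⁻¹)⁻¹ * (a₁p * a₂p * a₂m⁻¹ * a₁p⁻¹) * (a₁p * a₁m⁻¹) ∧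
    a₄p * a₃p * a₃m⁻¹ * a₄p⁻¹ = a₁p * a₁m⁻¹ := by
  have e4 : a₄m⁻¹ = a₃m * (a₁m * a₂m)⁻¹ := by rw [h2]; group
  have e3 : a₃m = a₄p⁻¹ * (a₁m * a₂p) := by rw [h3]; group
  constructor
  · rw [e4, ← mul_assoc, ← h3]; group
  · rw [← h1, e3]; group
end

section
/- Let κ₁, κ₂ ∈ ℂ∖{0} and ε₁, ε₂, φ₁, φ₂ ∈ ℂ with ε₁φ₂ + κ₂ ≠ 0, and define κ₄, φ₄, κ₃, ε₃, ε₄, φ₃ by the braiding formulas κ₄ = ε₁φ₂ + κ₂, φ₄ = κ₁φ₂, κ₃ = κ₁κ₂/(ε₁φ₂ + κ₂), ε₃ = ε₁/(ε₁φ₂ + κ₂), ε₄ = (ε₁κ₂² + ε₂κ₂ + (ε₁²κ₂ + ε₁ε₂)φ₂ − ε₁)/(κ₁κ₂), φ₃ = (κ₂²φ₁ + ε₁φ₂² + (ε₁κ₂φ₁ − (κ₁² − 1)κ₂)φ₂)/(ε₁φ₂ + κ₂). Then κ₃ + (1 − ε₃φ₃)/κ₃ = κ₁ + (1 − ε₁φ₁)/κ₁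 and κ₄ + (1 − ε₄φ₄)/κ₄ = κ₂ + (1 − ε₂φ₂)/κ₂; that is, the SL₂(ℂ)-matrices ψ(a₃) and ψ(a₁) have equal traces, and ψ(a₄) and ψ(a₂) have equal traces, so the braiding preserves fractional eigenvalues. -/
/-- The `SL₂(ℂ)*`-biquandle braiding preserves fractional eigenvalues: with `a₄, a₃`
defined from `a₁, a₂` by the braiding formulas, the `SL₂(ℂ)`-matrices `ψ(a₃)` and `ψ(a₁)`
have equal traces, and `ψ(a₄)` and `ψ(a₂)` have equal traces, where
`tr ψ(a) = κ + (1 − εφ)/κ` for the `SL₂(ℂ)*`-element with parameters `(κ, ε, φ)`. -/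
theorem stmt5 (κ₁ κ₂ ε₁ ε₂ φ₁ φ₂ : ℂ) (hκ₁ : κ₁ ≠ 0) (hκ₂ : κ₂ ≠ 0)
    (h : ε₁ * φ₂ + κ₂ ≠ 0)
    (κ₄ φ₄ κ₃ ε₃ ε₄ φ₃ : ℂ)
    (hκ₄ : κ₄ = ε₁ * φ₂ + κ₂)
    (hφ₄ : φ₄ = κ₁ * φ₂)
    (hκ₃ : κ₃ = κ₁ * κ₂ / (ε₁ * φ₂ + κ₂))
    (hε₃ : ε₃ = ε₁ / (ε₁ * φ₂ + κ₂))
    (hε₄ : ε₄ = (ε₁ * κ₂ ^ 2 + ε₂ * κ₂ + (ε₁ ^ 2 * κ₂ + ε₁ * ε₂) * φ₂ - ε₁) / (κ₁ * κ₂))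
    (hφ₃ : φ₃ = (κ₂ ^ 2 * φ₁ + ε₁ * φ₂ ^ 2 + (ε₁ * κ₂ * φ₁ - (κ₁ ^ 2 - 1) * κ₂) * φ₂) /
      (ε₁ * φ₂ + κ₂)) :
    κ₃ + (1 - ε₃ * φ₃) / κ₃ = κ₁ + (1 - ε₁ * φ₁) / κ₁ ∧
    κ₄ + (1 - ε₄ * φ₄) / κ₄ = κ₂ + (1 - ε₂ * φ₂) / κ₂ := by
  subst hκ₄ hφ₄ hκ₃ hε₃ hε₄ hφ₃
  constructor <;> field_simp <;> ring
end

section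
/- Let n ≥ 1 and let g₁, …, gₙ ∈ SL₂(ℂ). Then there exists h ∈ SL₂(ℂ) such that for every i ∈ {1, …, n} the (1,1) entry of the matrix h·(gᵢ·gᵢ₋₁·⋯·g₁)·h⁻¹ is nonzero; that is, every tuple of SL₂(ℂ)-colors is simultaneously conjugate to an admissible tuple. -/
/-- Every tuple of `SL₂(ℂ)`-colors is simultaneously conjugate to an admissible tuple:
for any `g₁, …, gₙ ∈ SL₂(ℂ)` there is `h ∈ SL₂(ℂ)` such that for each `i` the `(1,1)`
entry of `h·(gᵢ·gᵢ₋₁⋯g₁)·h⁻¹` is nonzero. -/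
theorem stmt7 (n : ℕ) (hn : 1 ≤ n) (g : Fin n → Matrix.SpecialLinearGroup (Fin 2) ℂ) :
    ∃ h : Matrix.SpecialLinearGroup (Fin 2) ℂ,
      ∀ i : Fin n,
        (↑(h * ((List.ofFn g).take (i.1 + 1)).reverse.prod * h⁻¹) :
          Matrix (Fin 2) (Fin 2) ℂ) 0 0 ≠ 0 := by
  set p : Fin n → Matrix.SpecialLinearGroup (Fin 2) ℂ :=
    fun i => ((List.ofFn g).take (i.1 + 1)).reverse.prod with hp
  obtain ⟨t, ht⟩ := Infinite.exists_notMem_finset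
    (Finset.univ.image fun i : Fin n => -((p i : Matrix (Fin 2) (Fin 2) ℂ) 0 0) /
      ((p i : Matrix (Fin 2) (Fin 2) ℂ) 1 0))
  have hu : (!![1, t; 0, 1] : Matrix (Fin 2) (Fin 2) ℂ).det = 1 := by
    simp [Matrix.det_fin_two_of]
  set u : Matrix.SpecialLinearGroup (Fin 2) ℂ := ⟨!![1, t; 0, 1], hu⟩ with hu'
  refine ⟨u, fun i => ?_⟩
  set M : Matrix (Fin 2) (Fin 2) ℂ := (p i : Matrix (Fin 2) (Fin 2) ℂ) with hM
  have hdet : M.det = 1 := (p i).2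
  have hinv : ((u⁻¹ : Matrix.SpecialLinearGroup (Fin 2) ℂ) : Matrix (Fin 2) (Fin 2) ℂ)
      = (!![1, -t; 0, 1] : Matrix (Fin 2) (Fin 2) ℂ) := by
    rw [Matrix.SpecialLinearGroup.coe_inv, hu', Matrix.adjugate_fin_two]
    norm_num
  have key : (↑(u * p i * u⁻¹) : Matrix (Fin 2) (Fin 2) ℂ) 0 0
      = M 0 0 + t * M 1 0 := by
    rw [Matrix.SpecialLinearGroup.coe_mul, Matrix.SpecialLinearGroup.coe_mul, hinv, ← hM, hu']
    simp [Matrix.mul_apply, Matrix.vecMul, dotProduct, Fin.sum_univ_two]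
  rw [key]
  by_cases hc : M 1 0 = 0
  · have ha : M 0 0 ≠ 0 := by
      intro h0
      rw [Matrix.det_fin_two, h0, hc] at hdet
      simp at hdet
    simpa [hc] using ha
  · intro h0
    apply ht
    refine Finset.mem_image.2 ⟨i, Finset.mem_univ i, ?_⟩
    rw [← hM]
    field_simp
    linear_combination -h0
end

section
/- Let (K, E, F) be a U-triple in an associative unital ℂ-algebra A. Then each of the elements K², E², F² commutes with each of K, E, F; the Casimir element Ω := iEF + K − K⁻¹ commutes with each of K, E, F; and Ω² = (K − K⁻¹)² − E²F². -/
lemma aux_inv {A : Type*} [Ring A] (K Kinv E : A)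
    (hK1 : K * Kinv = 1) (hK2 : Kinv * K = 1) (h : K * E = -(E * K)) :
    Kinv * E = -(E * Kinv) := by
  have h2 : E * Kinv = -(Kinv * E) := by
    calc E * Kinv = Kinv * (K * E) * Kinv := by
          rw [← mul_assoc, hK2, one_mul]
      _ = Kinv * (-(E * K)) * Kinv := by rw [h]
      _ = -(Kinv * E * (K * Kinv)) := by noncomm_ring
      _ = -(Kinv * E) := by rw [hK1, mul_one]
  simpa using congrArg Neg.neg h2.symm

lemma aux_sq {A : Type*} [Ring A] {a b : A} (h : a * b = -(b * a)) :
    Commute (a ^ 2) b := by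
  rw [commute_iff_eq]
  calc a ^ 2 * b = a * (a * b) := by rw [sq, mul_assoc]
    _ = a * (-(b * a)) := by rw [h]
    _ = -(a * b) * a := by noncomm_ring
    _ = -(-(b * a)) * a := by rw [h]
    _ = b * a ^ 2 := by noncomm_ring

/-- For a U-triple `(K, E, F)` (the relations of `U_i(sl₂)` at `q = i`, with `Kinv` a
two-sided inverse of `K`) in an associative unital ℂ-algebra: `K², E², F²` commute with
each of `K, E, F`; the Casimir `Ω = iEF + K − K⁻¹` commutes with each of `K, E, F`; and
`Ω² = (K − K⁻¹)² − E²F²`. -/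
theorem stmt8 {A : Type*} [Ring A] [Algebra ℂ A] (K Kinv E F Ω : A)
    (hK1 : K * Kinv = 1) (hK2 : Kinv * K = 1)
    (hKE : K * E = -(E * K)) (hKF : K * F = -(F * K))
    (hEF : E * F - F * E = (2 * Complex.I) • (K - Kinv))
    (hΩ : Ω = Complex.I • (E * F) + K - Kinv) :
    (Commute (K ^ 2) K ∧ Commute (K ^ 2) E ∧ Commute (K ^ 2) F) ∧
    (Commute (E ^ 2) K ∧ Commute (E ^ 2) E ∧ Commute (E ^ 2) F) ∧
    (Commute (F ^ 2) K ∧ Commute (F ^ 2) E ∧ Commute (F ^ 2) F) ∧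
    (Commute Ω K ∧ Commute Ω E ∧ Commute Ω F) ∧
    Ω ^ 2 = (K - Kinv) ^ 2 - E ^ 2 * F ^ 2 := by
  have hKiE : Kinv * E = -(E * Kinv) := aux_inv K Kinv E hK1 hK2 hKE
  have hKiF : Kinv * F = -(F * Kinv) := aux_inv K Kinv F hK1 hK2 hKF
  have hEK : E * K = -(K * E) := by rw [hKE, neg_neg]
  have hFK : F * K = -(K * F) := by rw [hKF, neg_neg]
  have hXE : (K - Kinv) * E = -(E * (K - Kinv)) := by
    rw [sub_mul, hKE, hKiE, mul_sub]; abel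
  have hXF : (K - Kinv) * F = -(F * (K - Kinv)) := by
    rw [sub_mul, hKF, hKiF, mul_sub]; abel
  have hEX : E * (K - Kinv) = -((K - Kinv) * E) := by rw [hXE, neg_neg]
  have hFX : F * (K - Kinv) = -((K - Kinv) * F) := by rw [hXF, neg_neg]
  -- E² commutes with F
  have hE2F : Commute (E ^ 2) F := by
    rw [commute_iff_eq, ← sub_eq_zero]
    calc E ^ 2 * F - F * E ^ 2
        = E * (E * F - F * E) + (E * F - F * E) * E := by noncomm_ring
      _ = (2 * Complex.I) • (E * (K - Kinv)) + (2 * Complex.I) • ((K - Kinv) * E) := by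
          rw [hEF, mul_smul_comm, smul_mul_assoc]
      _ = 0 := by rw [hEX]; simp
  have hF2E : Commute (F ^ 2) E := by
    rw [commute_iff_eq, ← sub_eq_zero]
    calc F ^ 2 * E - E * F ^ 2
        = -(F * (E * F - F * E) + (E * F - F * E) * F) := by noncomm_ring
      _ = -((2 * Complex.I) • (F * (K - Kinv)) + (2 * Complex.I) • ((K - Kinv) * F)) := by
          rw [hEF, mul_smul_comm, smul_mul_assoc]
      _ = 0 := by rw [hFX]; simp
  -- K commutes with E*F
  have hKEF : K * (E * F) = (E * F) * K := by
    rw [← mul_assoc, hKE, neg_mul, mul_assoc, hKF, mul_neg, neg_neg, ← mul_assoc]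
  have hXP : (K - Kinv) * (E * F) = (E * F) * (K - Kinv) := by
    rw [← mul_assoc, hXE, neg_mul, mul_assoc, hXF, mul_neg, neg_neg, ← mul_assoc]
  have hΩK : Commute Ω K := by
    rw [commute_iff_eq, hΩ]
    simp only [add_mul, sub_mul, mul_add, mul_sub, smul_mul_assoc, mul_smul_comm,
      hK1, hK2, hKEF]
  have hΩE : Commute Ω E := by
    rw [commute_iff_eq, ← sub_eq_zero, hΩ]
    calc (Complex.I • (E * F) + K - Kinv) * E - E * (Complex.I • (E * F) + K - Kinv)
        = Complex.I • (-(E * (E * F - F * E))) + ((K - Kinv) * E - E * (K - Kinv)) := by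
          noncomm_ring
          try module
      _ = Complex.I • (-((2 * Complex.I) • (E * (K - Kinv)))) +
            (-(E * (K - Kinv)) - E * (K - Kinv)) := by rw [hEF, mul_smul_comm, hXE]
      _ = 0 := by
          simp only [smul_neg, smul_smul]
          rw [show Complex.I * (2 * Complex.I) = -2 by
            rw [show Complex.I * (2 * Complex.I) = 2 * (Complex.I * Complex.I) by ring,
              Complex.I_mul_I]; ring]
          module
  have hΩF : Commute Ω F := by
    rw [commute_iff_eq, ← sub_eq_zero, hΩ]
    calc (Complex.I • (E * F) + K - Kinv) * F - F * (Complex.I • (E * F) + K - Kinv)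
        = Complex.I • ((E * F - F * E) * F) + ((K - Kinv) * F - F * (K - Kinv)) := by
          noncomm_ring
          try module
      _ = Complex.I • ((2 * Complex.I) • (-(F * (K - Kinv)))) +
            (-(F * (K - Kinv)) - F * (K - Kinv)) := by
          rw [hEF, smul_mul_assoc, hXF]
      _ = 0 := by
          simp only [smul_neg, smul_smul]
          rw [show Complex.I * (2 * Complex.I) = -2 by
            rw [show Complex.I * (2 * Complex.I) = 2 * (Complex.I * Complex.I) by ring,
              Complex.I_mul_I]; ring]
          module
  -- the Casimir square
  have hFE : F * E = E * F - (2 * Complex.I) • (K - Kinv) := by rw [← hEF]; abel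
  have hPP : (E * F) * (E * F) = E ^ 2 * F ^ 2 + (2 * Complex.I) • ((E * F) * (K - Kinv)) := by
    calc (E * F) * (E * F) = E * (F * E) * F := by noncomm_ring
      _ = E * (E * F - (2 * Complex.I) • (K - Kinv)) * F := by rw [hFE]
      _ = E ^ 2 * F ^ 2 - (2 * Complex.I) • (E * ((K - Kinv) * F)) := by
          noncomm_ring
          try module
      _ = E ^ 2 * F ^ 2 - (2 * Complex.I) • (E * (-(F * (K - Kinv)))) := by rw [hXF]
      _ = E ^ 2 * F ^ 2 + (2 * Complex.I) • ((E * F) * (K - Kinv)) := by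
          noncomm_ring
          try module
  have hΩ2 : Ω ^ 2 = (K - Kinv) ^ 2 - E ^ 2 * F ^ 2 := by
    rw [hΩ, add_sub_assoc]
    calc (Complex.I • (E * F) + (K - Kinv)) ^ 2
        = (Complex.I * Complex.I) • ((E * F) * (E * F)) +
            Complex.I • ((E * F) * (K - Kinv)) + Complex.I • ((K - Kinv) * (E * F)) +
            (K - Kinv) ^ 2 := by
          noncomm_ring
          try module
      _ = (-1 : ℂ) • (E ^ 2 * F ^ 2 + (2 * Complex.I) • ((E * F) * (K - Kinv))) +
            Complex.I • ((E * F) * (K - Kinv)) + Complex.I • ((E * F) * (K - Kinv)) +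
            (K - Kinv) ^ 2 := by rw [hPP, hXP, Complex.I_mul_I]
      _ = (K - Kinv) ^ 2 - E ^ 2 * F ^ 2 := by module
  exact ⟨⟨(Commute.refl K).pow_left 2, aux_sq hKE, aux_sq hKF⟩,
    ⟨aux_sq hEK, (Commute.refl E).pow_left 2, hE2F⟩,
    ⟨aux_sq hFK, hF2E, (Commute.refl F).pow_left 2⟩,
    ⟨hΩK, hΩE, hΩF⟩, hΩ2⟩
end

section
/- Let (K_j, E_j, F_j), j = 1, …, n, be an n-fold U-system in an associative unital ℂ-algebra A in which each Casimir Ω_j := iE_jF_j + K_j − K_j⁻¹ is invertible. Set F̃_j := iK_jF_j, α_j¹ := K₁⋯K_{j−1}·E_j·Ω_j⁻¹ and α_j² := K₁⋯K_{j−1}·F̃_j·Ω_j⁻¹. Then: (1) for all j ≠ k and all μ, ν ∈ {1,2}, α_jᵘ·α_kᵛ + α_kᵛ·α_jᵘ = 0; (2) (α_j¹)² = K₁²⋯K_{j−1}²·E_j²·Ω_j⁻²; (3) (α_j²)² = K₁²⋯K_{j−1}²·K_j²F_j²·Ω_j⁻²; (4) α_j¹·α_j² + α_j²·α_j¹ =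 2·K₁²⋯K_{j−1}²·(K_j² − 1)·Ω_j⁻². In particular all anticommutators of the α's lie in the commutative subalgebra generated by the K_j^{±2}, E_j², F_j², Ω_j⁻², so the α's generate a Clifford algebra over that subalgebra. -/
section UAux
variable {A : Type*} [Ring A] [Algebra ℂ A]

omit [Algebra ℂ A] in
private lemma swapc (x y z : A) (h : x * y = y * x) : x * (y * z) = y * (x * z) := by
  rw [← mul_assoc, h, mul_assoc]

omit [Algebra ℂ A] in
private lemma swapn (x y z : A) (h : x * y = -(y * x)) : x * (y * z) = -(y * (x * z)) := by
  rw [← mul_assoc, h, neg_mul, mul_assoc]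

omit [Algebra ℂ A] in
private lemma comm_inv {a b x : A} (h1 : a * b = 1) (h2 : b * a = 1) (h : Commute x a) :
    Commute x b := by
  have h0 : x * b = b * a * (x * b) := by rw [h2, one_mul]
  calc x * b = b * a * (x * b) := h0
    _ = b * (a * x) * b := by rw [mul_assoc, ← mul_assoc a x b, ← mul_assoc]
    _ = b * (x * a) * b := by rw [h.eq]
    _ = b * x * (a * b) := by rw [← mul_assoc, mul_assoc (b*x) a b]
    _ = b * x := by rw [h1, mul_one]

omit [Algebra ℂ A] in
private lemma anticomm_three (a b c d e f : A)
    (had : a * d = d * a) (hae : a * e = e * a) (haf : a * f = f * a)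
    (hbd : b * d = -(d * b)) (hbe : b * e = e * b) (hbf : b * f = f * b)
    (hcd : c * d = d * c) (hce : c * e = e * c) (hcf : c * f = f * c) :
    a * b * c * (d * e * f) + d * e * f * (a * b * c) = 0 := by
  have L : a * b * c * (d * e * f) = -(d * (a * (b * (c * (e * f))))) := by
    simp only [mul_assoc]
    rw [swapc c d _ hcd, swapn b d _ hbd, mul_neg, swapc a d _ had]
  have R : d * e * f * (a * b * c) = d * (a * (b * (c * (e * f)))) := by
    simp only [mul_assoc]
    rw [swapc f a _ haf.symm, swapc e a _ hae.symm, swapc f b _ hbf.symm,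
      swapc e b _ hbe.symm, ← hcf, swapc e c _ hce.symm]
  rw [L, R, neg_add_cancel]

omit [Algebra ℂ A] in
private lemma sq_three (a b c : A) (hba : b * a = a * b) (hca : c * a = a * c)
    (hcb : c * b = b * c) :
    a * b * c * (a * b * c) = a * a * (b * b * (c * c)) := by
  simp only [mul_assoc]
  rw [swapc c a _ hca, swapc b a _ hba, swapc c b _ hcb]

omit [Algebra ℂ A] in
private lemma anti_sq_three (a b b' c : A) (hba : b * a = a * b) (hb'a : b' * a = a * b')
    (hca : c * a = a * c) (hcb : c * b = b * c) (hcb' : c * b' = b' * c) :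
    a * b * c * (a * b' * c) + a * b' * c * (a * b * c)
      = a * a * ((b * b' + b' * b) * (c * c)) := by
  have L : a * b * c * (a * b' * c) = a * (a * (b * (b' * (c * c)))) := by
    simp only [mul_assoc]
    rw [swapc c a _ hca, swapc b a _ hba, swapc c b' _ hcb']
  have R : a * b' * c * (a * b * c) = a * (a * (b' * (b * (c * c)))) := by
    simp only [mul_assoc]
    rw [swapc c a _ hca, swapc b' a _ hb'a, swapc c b _ hcb]
  rw [L, R]
  simp only [mul_assoc, add_mul, mul_add]

omit [Algebra ℂ A] in
private lemma anticomm_mid (x p k m : A) (h1 : x * p = p * x) (h2 : x * k = -(k * x))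
    (h3 : x * m = m * x) : x * (p * (k * m)) = -(p * (k * m) * x) := by
  rw [swapc x p _ h1, swapn x k _ h2, h3]
  simp only [mul_neg, mul_assoc]

omit [Algebra ℂ A] in
private lemma prod_map_sq {ι : Type*} (f : ι → A) (hf : ∀ a b, Commute (f a) (f b)) :
    ∀ L : List ι, (L.map f).prod * (L.map f).prod = (L.map fun x => f x ^ 2).prod := by
  intro L
  induction L with
  | nil => simp
  | cons x L ih =>
    have hx : Commute (f x) ((L.map f).prod) :=
      Commute.list_prod_right _ _ (by
        intro y hy
        simp only [List.mem_map] at hy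
        obtain ⟨a, _, rfl⟩ := hy
        exact hf x a)
    calc (f x :: L.map f).prod * (f x :: L.map f).prod
        = f x * ((L.map f).prod * f x) * (L.map f).prod := by
          simp only [List.prod_cons, mul_assoc]
      _ = f x * (f x * (L.map f).prod) * (L.map f).prod := by rw [hx.eq]
      _ = f x ^ 2 * ((L.map f).prod * (L.map f).prod) := by rw [pow_two]; simp only [mul_assoc]
      _ = f x ^ 2 * (L.map fun x => f x ^ 2).prod := by rw [ih]
      _ = _ := by simp

private lemma hI2 : Complex.I * (2 * Complex.I) = -2 := by
  rw [mul_comm, mul_assoc, Complex.I_mul_I]; norm_num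

omit [Algebra ℂ A] in
private lemma hEK {K E : A} (hKE : K * E = -(E * K)) : E * K = -(K * E) := by
  rw [hKE, neg_neg]

omit [Algebra ℂ A] in
private lemma hKinvE {K Kinv E : A} (hK1 : K * Kinv = 1) (hK2 : Kinv * K = 1)
    (hKE : K * E = -(E * K)) : Kinv * E = -(E * Kinv) := by
  calc Kinv * E = Kinv * (E * (K * Kinv)) := by rw [hK1, mul_one]
    _ = Kinv * ((E * K) * Kinv) := by rw [mul_assoc]
    _ = Kinv * ((-(K * E)) * Kinv) := by rw [hEK hKE]
    _ = -((Kinv * K) * (E * Kinv)) := by simp only [neg_mul, mul_neg, mul_assoc]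
    _ = -(E * Kinv) := by rw [hK2, one_mul]

private lemma commKΩ {K Kinv E F : A} (hK1 : K * Kinv = 1) (hK2 : Kinv * K = 1)
    (hKE : K * E = -(E * K)) (hKF : K * F = -(F * K)) :
    K * (Complex.I • (E * F) + K - Kinv) = (Complex.I • (E * F) + K - Kinv) * K := by
  have hKEF : K * (E * F) = (E * F) * K := by
    calc K * (E * F) = (K * E) * F := (mul_assoc _ _ _).symm
      _ = -(E * (K * F)) := by rw [hKE, neg_mul, mul_assoc]
      _ = -(E * (-(F * K))) := by rw [hKF]
      _ = (E * F) * K := by rw [mul_neg, neg_neg, mul_assoc]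
  simp only [mul_add, add_mul, mul_sub, sub_mul, mul_smul_comm, smul_mul_assoc, hKEF, hK1, hK2]

private lemma commEΩ {K Kinv E F : A} (hK1 : K * Kinv = 1) (hK2 : Kinv * K = 1)
    (hKE : K * E = -(E * K))
    (hEF : E * F - F * E = (2 * Complex.I) • (K - Kinv)) :
    E * (Complex.I • (E * F) + K - Kinv) = (Complex.I • (E * F) + K - Kinv) * E := by
  have h2 : E * (E * F) - (E * F) * E = (2 * Complex.I) • (E * K - E * Kinv) := by
    rw [mul_assoc, ← mul_sub, hEF, mul_smul_comm, mul_sub]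
  have h1 : Complex.I • (E * (E * F))
      = (-2 : ℂ) • (E * K - E * Kinv) + Complex.I • ((E * F) * E) := by
    rw [← sub_eq_iff_eq_add, ← smul_sub, h2, smul_smul, hI2]
  simp only [mul_add, add_mul, mul_sub, sub_mul, mul_smul_comm, smul_mul_assoc, hKE,
    hKinvE hK1 hK2 hKE]
  rw [h1]
  module

private lemma commFΩ {K Kinv E F : A} (hK1 : K * Kinv = 1) (hK2 : Kinv * K = 1)
    (hKF : K * F = -(F * K))
    (hEF : E * F - F * E = (2 * Complex.I) • (K - Kinv)) :
    F * (Complex.I • (E * F) + K - Kinv) = (Complex.I • (E * F) + K - Kinv) * F := by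
  have h2 : F * (E * F) - (E * F) * F = (2 * Complex.I) • (F * K - F * Kinv) := by
    rw [← mul_assoc, ← sub_mul, ← neg_sub (E * F) (F * E), hEF, ← smul_neg,
      smul_mul_assoc, neg_mul, sub_mul, hKinvE hK1 hK2 hKF, hKF]
    module
  have h1 : Complex.I • (F * (E * F))
      = (-2 : ℂ) • (F * K - F * Kinv) + Complex.I • ((E * F) * F) := by
    rw [← sub_eq_iff_eq_add, ← smul_sub, h2, smul_smul, hI2]
  simp only [mul_add, add_mul, mul_sub, sub_mul, mul_smul_comm, smul_mul_assoc, hKF,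
    hKinvE hK1 hK2 hKF]
  rw [h1]
  module

private lemma anti_sum {K Kinv E F : A} (hK1 : K * Kinv = 1)
    (hKE : K * E = -(E * K))
    (hEF : E * F - F * E = (2 * Complex.I) • (K - Kinv)) :
    E * (Complex.I • (K * F)) + (Complex.I • (K * F)) * E = 2 * (K ^ 2 - 1) := by
  have hEKF : E * (K * F) = -(K * (E * F)) := by
    rw [← mul_assoc, hEK hKE, neg_mul, mul_assoc]
  have step : -(K * (E * F)) + K * (F * E) = -((2 * Complex.I) • (K * K - K * Kinv)) := by
    have h3 : -(K * (E * F)) + K * (F * E) = -(K * (E * F - F * E)) := by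
      rw [mul_sub]; abel
    rw [h3, hEF, mul_smul_comm, mul_sub]
  rw [mul_smul_comm, smul_mul_assoc, hEKF, mul_assoc, ← smul_add, step, hK1, smul_neg,
    smul_smul, hI2, pow_two, two_mul]
  module

private lemma b'_sq {K F : A} (hKF : K * F = -(F * K)) :
    (Complex.I • (K * F)) * (Complex.I • (K * F)) = K ^ 2 * F ^ 2 := by
  have h : (K * F) * (K * F) = -(K * (K * (F * F))) := by
    rw [mul_assoc K F (K * F), ← mul_assoc F K F, hEK hKF, neg_mul, mul_neg]
    simp only [mul_assoc]
  rw [smul_mul_assoc, mul_smul_comm, smul_smul, Complex.I_mul_I, neg_one_smul, h, neg_neg,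
    pow_two, pow_two]
  simp only [mul_assoc]

end UAux

section ULists
variable {n : ℕ}

private lemma mem_take_lt {m : ℕ} {l : Fin n} (hl : l ∈ (List.finRange n).take m) : l.1 < m := by
  rw [List.mem_iff_getElem] at hl
  obtain ⟨i, hi, rfl⟩ := hl
  have hi' : i < m := lt_of_lt_of_le hi (by simp [List.length_take])
  simpa [List.getElem_take, List.getElem_finRange] using hi'

private lemma mem_drop_take_gt {m : ℕ} {j l : Fin n}
    (hl : l ∈ ((List.finRange n).take m).drop (j.1 + 1)) : j.1 < l.1 := by
  rw [List.mem_iff_getElem] at hl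
  obtain ⟨i, hi, rfl⟩ := hl
  simp [List.getElem_drop, List.getElem_take, List.getElem_finRange]
  omega

private lemma take_split {j k : Fin n} (h : j.1 < k.1) :
    (List.finRange n).take k.1
      = (List.finRange n).take j.1 ++ j :: ((List.finRange n).take k.1).drop (j.1 + 1) := by
  have hlen : j.1 < ((List.finRange n).take k.1).length := by
    simp [List.length_take]
    omega
  have h1 : ((List.finRange n).take k.1).take j.1 = (List.finRange n).take j.1 := by
    rw [List.take_take]
    congr 1
    omega
  have h2 : ((List.finRange n).take k.1)[j.1]'hlen = j := by
    simp [List.getElem_take, List.getElem_finRange]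
  conv_lhs => rw [← List.take_append_drop j.1 ((List.finRange n).take k.1),
    List.drop_eq_getElem_cons hlen, h1, h2]

end ULists

private def Xel {A : Type*} [Ring A] [Algebra ℂ A] {n : ℕ} (K E F : Fin n → A)
    (j : Fin n) (μ : Fin 2) : A :=
  if μ = 0 then E j else Complex.I • (K j * F j)

private def alphaD {A : Type*} [Ring A] [Algebra ℂ A] {n : ℕ} (K E F Ωinv : Fin n → A)
    (j : Fin n) (μ : Fin 2) : A :=
  (((List.finRange n).take j.1).map K).prod * Xel K E F j μ * Ωinv j

theorem stmt9_core {A : Type*} [Ring A] [Algebra ℂ A] (n : ℕ)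
    (K Kinv E F Ωinv : Fin n → A)
    (hKinv : ∀ j, K j * Kinv j = 1 ∧ Kinv j * K j = 1)
    (hKE : ∀ j, K j * E j = -(E j * K j))
    (hKF : ∀ j, K j * F j = -(F j * K j))
    (hEF : ∀ j, E j * F j - F j * E j = (2 * Complex.I) • (K j - Kinv j))
    (hcomm : ∀ j k : Fin n, j ≠ k → ∀ x ∈ ({K j, Kinv j, E j, F j} : Set A),
      ∀ y ∈ ({K k, Kinv k, E k, F k} : Set A), Commute x y)
    (hΩinv : ∀ j, (Complex.I • (E j * F j) + K j - Kinv j) * Ωinv j = 1 ∧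
      Ωinv j * (Complex.I • (E j * F j) + K j - Kinv j) = 1) :
    (∀ j k : Fin n, j ≠ k → ∀ μ ν : Fin 2, alphaD K E F Ωinv j μ * alphaD K E F Ωinv k ν
        + alphaD K E F Ωinv k ν * alphaD K E F Ωinv j μ = 0) ∧
    (∀ j : Fin n, alphaD K E F Ωinv j 0 * alphaD K E F Ωinv j 0 =
      (((List.finRange n).take j.1).map (fun k => K k ^ 2)).prod * E j ^ 2 * Ωinv j ^ 2) ∧
    (∀ j : Fin n, alphaD K E F Ωinv j 1 * alphaD K E F Ωinv j 1 =
      (((List.finRange n).take j.1).map (fun k => K k ^ 2)).prod * (K j ^ 2 * F j ^ 2) *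
        Ωinv j ^ 2) ∧
    (∀ j : Fin n, alphaD K E F Ωinv j 0 * alphaD K E F Ωinv j 1
        + alphaD K E F Ωinv j 1 * alphaD K E F Ωinv j 0 =
      2 * ((((List.finRange n).take j.1).map (fun k => K k ^ 2)).prod * (K j ^ 2 - 1) *
        Ωinv j ^ 2)) ∧
    (∀ j k : Fin n, ∀ μ ν : Fin 2,
      alphaD K E F Ωinv j μ * alphaD K E F Ωinv k ν
        + alphaD K E F Ωinv k ν * alphaD K E F Ωinv j μ ∈
      Algebra.adjoin ℂ
        (⋃ l : Fin n, ({K l ^ 2, Kinv l ^ 2, E l ^ 2, F l ^ 2, Ωinv l ^ 2} : Set A))) := by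
  have hK1 : ∀ j, K j * Kinv j = 1 := fun j => (hKinv j).1
  have hK2 : ∀ j, Kinv j * K j = 1 := fun j => (hKinv j).2
  have hΩ1 : ∀ j, (Complex.I • (E j * F j) + K j - Kinv j) * Ωinv j = 1 := fun j => (hΩinv j).1
  have hΩ2 : ∀ j, Ωinv j * (Complex.I • (E j * F j) + K j - Kinv j) = 1 := fun j => (hΩinv j).2
  have hXcase : ∀ μ : Fin 2, μ = 0 ∨ μ = 1 := by decide
  have hX0 : ∀ j, Xel K E F j 0 = E j := fun j => rfl
  have hX1 : ∀ j, Xel K E F j 1 = Complex.I • (K j * F j) := fun j => rfl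
  have cK : ∀ j k : Fin n, Commute (K j) (K k) := by
    intro j k
    rcases eq_or_ne j k with rfl | h
    · exact Commute.refl _
    · exact hcomm j k h _ (by simp) _ (by simp)
  have cXgen : ∀ (j k : Fin n) (μ : Fin 2) (y : A), j ≠ k →
      y ∈ ({K k, Kinv k, E k, F k} : Set A) → Commute (Xel K E F j μ) y := by
    intro j k μ y h hy
    rcases hXcase μ with rfl | rfl
    · rw [hX0]; exact hcomm j k h _ (by simp) _ hy
    · rw [hX1]
      exact ((hcomm j k h (K j) (by simp) y hy).mul_left
        (hcomm j k h (F j) (by simp) y hy)).smul_left _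
  have cXK : ∀ (j k : Fin n) (μ : Fin 2), j ≠ k → Commute (Xel K E F j μ) (K k) :=
    fun j k μ h => cXgen j k μ _ h (by simp)
  have cXX : ∀ (j k : Fin n) (μ ν : Fin 2), j ≠ k →
      Commute (Xel K E F j μ) (Xel K E F k ν) := by
    intro j k μ ν h
    rcases hXcase ν with rfl | rfl
    · rw [hX0]; exact cXgen j k μ _ h (by simp)
    · rw [hX1]
      exact ((cXgen j k μ _ h (by simp)).mul_right (cXgen j k μ _ h (by simp))).smul_right _
  have cgenΩinv : ∀ (x : A) (k : Fin n), Commute x (E k) → Commute x (F k) →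
      Commute x (K k) → Commute x (Kinv k) → Commute x (Ωinv k) := by
    intro x k h1 h2 h3 h4
    exact comm_inv (hΩ1 k) (hΩ2 k) ((((h1.mul_right h2).smul_right _).add_right h3).sub_right h4)
  have cKΩinv : ∀ l k : Fin n, Commute (K l) (Ωinv k) := by
    intro l k
    rcases eq_or_ne l k with rfl | h
    · exact comm_inv (hΩ1 l) (hΩ2 l) (commKΩ (hK1 l) (hK2 l) (hKE l) (hKF l))
    · exact cgenΩinv _ _ (hcomm l k h _ (by simp) _ (by simp))
        (hcomm l k h _ (by simp) _ (by simp)) (hcomm l k h _ (by simp) _ (by simp))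
        (hcomm l k h _ (by simp) _ (by simp))
  have cEΩinv : ∀ j, Commute (E j) (Ωinv j) :=
    fun j => comm_inv (hΩ1 j) (hΩ2 j) (commEΩ (hK1 j) (hK2 j) (hKE j) (hEF j))
  have cFΩinv : ∀ j, Commute (F j) (Ωinv j) :=
    fun j => comm_inv (hΩ1 j) (hΩ2 j) (commFΩ (hK1 j) (hK2 j) (hKF j) (hEF j))
  have cXΩinv : ∀ (j k : Fin n) (μ : Fin 2), Commute (Xel K E F j μ) (Ωinv k) := by
    intro j k μ
    rcases eq_or_ne j k with rfl | h
    · rcases hXcase μ with rfl | rfl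
      · rw [hX0]; exact cEΩinv j
      · rw [hX1]; exact ((cKΩinv j j).mul_left (cFΩinv j)).smul_left _
    · exact cgenΩinv _ _ (cXgen j k μ _ h (by simp)) (cXgen j k μ _ h (by simp))
        (cXgen j k μ _ h (by simp)) (cXgen j k μ _ h (by simp))
  have cΩΩ : ∀ j k : Fin n, Commute (Ωinv j) (Ωinv k) := by
    intro j k
    rcases eq_or_ne j k with rfl | h
    · exact Commute.refl _
    · have base : ∀ y ∈ ({K k, Kinv k, E k, F k} : Set A), Commute (Ωinv j) y := by
        intro y hy
        exact (cgenΩinv y j (hcomm k j h.symm y hy _ (by simp))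
          (hcomm k j h.symm y hy _ (by simp)) (hcomm k j h.symm y hy _ (by simp))
          (hcomm k j h.symm y hy _ (by simp))).symm
      exact cgenΩinv _ _ (base _ (by simp)) (base _ (by simp)) (base _ (by simp))
        (base _ (by simp))
  have aXK : ∀ (j : Fin n) (μ : Fin 2), Xel K E F j μ * K j = -(K j * Xel K E F j μ) := by
    intro j μ
    rcases hXcase μ with rfl | rfl
    · rw [hX0]; exact hEK (hKE j)
    · rw [hX1]
      have h : (K j * F j) * K j = -(K j * (K j * F j)) := by
        rw [mul_assoc, hEK (hKF j), mul_neg]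
      rw [smul_mul_assoc, h, smul_neg, mul_smul_comm]
  have cP : ∀ (m : ℕ) (x : A), (∀ l : Fin n, l.1 < m → Commute x (K l)) →
      Commute x ((((List.finRange n).take m).map K).prod) := by
    intro m x hx
    refine Commute.list_prod_right _ _ ?_
    intro y hy
    simp only [List.mem_map] at hy
    obtain ⟨l, hl, rfl⟩ := hy
    exact hx l (mem_take_lt hl)
  have aXP : ∀ (j k : Fin n) (μ : Fin 2), j.1 < k.1 →
      Xel K E F j μ * (((List.finRange n).take k.1).map K).prod
        = -((((List.finRange n).take k.1).map K).prod * Xel K E F j μ) := by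
    intro j k μ h
    rw [take_split (n := n) h, List.map_append, List.prod_append, List.map_cons,
      List.prod_cons]
    exact anticomm_mid _ _ _ _
      ((cP j.1 _ (fun l hl => cXK j l μ (Fin.ne_of_val_ne (by omega)))).eq)
      (aXK j μ)
      ((Commute.list_prod_right _ _ (by
          intro y hy
          simp only [List.mem_map] at hy
          obtain ⟨l, hl, rfl⟩ := hy
          exact cXK j l μ (Fin.ne_of_val_ne (by have := mem_drop_take_gt hl; omega)))).eq)
  have part1 : ∀ j k : Fin n, j ≠ k → ∀ μ ν : Fin 2,
      alphaD K E F Ωinv j μ * alphaD K E F Ωinv k ν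
        + alphaD K E F Ωinv k ν * alphaD K E F Ωinv j μ = 0 := by
    have core : ∀ j k : Fin n, j.1 < k.1 → ∀ μ ν : Fin 2,
        alphaD K E F Ωinv j μ * alphaD K E F Ωinv k ν
          + alphaD K E F Ωinv k ν * alphaD K E F Ωinv j μ = 0 := by
      intro j k h μ ν
      simp only [alphaD]
      exact anticomm_three _ _ _ _ _ _
        ((cP k.1 _ (fun l _ => (cP j.1 (K l) (fun m _ => cK l m)).symm)).eq)
        ((cP j.1 (Xel K E F k ν) (fun l hl => cXK k l ν (Fin.ne_of_val_ne (by omega)))).symm.eq)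
        ((cP j.1 (Ωinv k) (fun l _ => (cKΩinv l k).symm)).symm.eq)
        (aXP j k μ h)
        ((cXX j k μ ν (Fin.ne_of_val_ne (by omega))).eq)
        ((cXΩinv j k μ).eq)
        ((cP k.1 (Ωinv j) (fun l _ => (cKΩinv l j).symm)).eq)
        ((cXΩinv k j ν).symm.eq)
        ((cΩΩ j k).eq)
    intro j k h μ ν
    rcases h.lt_or_gt with hlt | hlt
    · exact core j k hlt μ ν
    · rw [add_comm]; exact core k j hlt ν μ
  have cEP : ∀ j : Fin n, Commute (E j) ((((List.finRange n).take j.1).map K).prod) :=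
    fun j => cP j.1 (E j) (fun l hl => hcomm j l (Fin.ne_of_val_ne (by omega)) _ (by simp)
      _ (by simp))
  have cKFP : ∀ j : Fin n,
      Commute (Complex.I • (K j * F j)) ((((List.finRange n).take j.1).map K).prod) :=
    fun j => cP j.1 _ (fun l hl =>
      ((hcomm j l (Fin.ne_of_val_ne (by omega)) _ (by simp) _ (by simp)).mul_left
        (hcomm j l (Fin.ne_of_val_ne (by omega)) _ (by simp) _ (by simp))).smul_left _)
  have cΩP : ∀ j : Fin n, Commute (Ωinv j) ((((List.finRange n).take j.1).map K).prod) :=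
    fun j => cP j.1 (Ωinv j) (fun l _ => (cKΩinv l j).symm)
  have cΩKF : ∀ j : Fin n, Commute (Ωinv j) (Complex.I • (K j * F j)) :=
    fun j => (((cKΩinv j j).mul_left (cFΩinv j)).smul_left _).symm
  have part2 : ∀ j : Fin n, alphaD K E F Ωinv j 0 * alphaD K E F Ωinv j 0 =
      (((List.finRange n).take j.1).map (fun k => K k ^ 2)).prod * E j ^ 2 * Ωinv j ^ 2 := by
    intro j
    simp only [alphaD, hX0]
    rw [sq_three _ _ _ ((cEP j).eq) ((cΩP j).eq) ((cEΩinv j).symm.eq),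
      prod_map_sq K cK, pow_two (E j), pow_two (Ωinv j)]
    simp only [mul_assoc]
  have part3 : ∀ j : Fin n, alphaD K E F Ωinv j 1 * alphaD K E F Ωinv j 1 =
      (((List.finRange n).take j.1).map (fun k => K k ^ 2)).prod * (K j ^ 2 * F j ^ 2) *
        Ωinv j ^ 2 := by
    intro j
    simp only [alphaD, hX1]
    rw [sq_three _ _ _ ((cKFP j).eq) ((cΩP j).eq) ((cΩKF j).eq),
      prod_map_sq K cK, b'_sq (hKF j), pow_two (Ωinv j)]
    simp only [mul_assoc]
  have part4 : ∀ j : Fin n, alphaD K E F Ωinv j 0 * alphaD K E F Ωinv j 1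
      + alphaD K E F Ωinv j 1 * alphaD K E F Ωinv j 0 =
      2 * ((((List.finRange n).take j.1).map (fun k => K k ^ 2)).prod * (K j ^ 2 - 1) *
        Ωinv j ^ 2) := by
    intro j
    simp only [alphaD, hX0, hX1]
    rw [anti_sq_three _ _ _ _ ((cEP j).eq) ((cKFP j).eq) ((cΩP j).eq) ((cEΩinv j).symm.eq)
        ((cΩKF j).eq), anti_sum (hK1 j) (hKE j) (hEF j), prod_map_sq K cK,
      pow_two (Ωinv j), mul_assoc (2 : A), ← mul_assoc _ (2 : A),
      ((Commute.ofNat_right _ 2).eq :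
        (((List.finRange n).take j.1).map (fun k => K k ^ 2)).prod * 2
          = 2 * (((List.finRange n).take j.1).map (fun k => K k ^ 2)).prod)]
    simp only [mul_assoc]
  refine ⟨part1, part2, part3, part4, ?_⟩
  intro j k μ ν
  set S := Algebra.adjoin ℂ
    (⋃ l : Fin n, ({K l ^ 2, Kinv l ^ 2, E l ^ 2, F l ^ 2, Ωinv l ^ 2} : Set A)) with hS
  have memK : ∀ l : Fin n, K l ^ 2 ∈ S :=
    fun l => Algebra.subset_adjoin (Set.mem_iUnion.mpr ⟨l, by simp⟩)
  have memE : ∀ l : Fin n, E l ^ 2 ∈ S :=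
    fun l => Algebra.subset_adjoin (Set.mem_iUnion.mpr ⟨l, by simp⟩)
  have memF : ∀ l : Fin n, F l ^ 2 ∈ S :=
    fun l => Algebra.subset_adjoin (Set.mem_iUnion.mpr ⟨l, by simp⟩)
  have memΩ : ∀ l : Fin n, Ωinv l ^ 2 ∈ S :=
    fun l => Algebra.subset_adjoin (Set.mem_iUnion.mpr ⟨l, by simp⟩)
  have memQ : ∀ j : Fin n, (((List.finRange n).take j.1).map (fun k => K k ^ 2)).prod ∈ S := by
    intro j
    refine Subalgebra.list_prod_mem _ ?_
    intro x hx
    simp only [List.mem_map] at hx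
    obtain ⟨l, _, rfl⟩ := hx
    exact memK l
  have mem2 : (2 : A) ∈ S := by
    have h2 := S.algebraMap_mem (2 : ℂ)
    rwa [map_ofNat] at h2
  rcases eq_or_ne j k with rfl | hne
  · rcases hXcase μ with rfl | rfl <;> rcases hXcase ν with rfl | rfl
    · rw [part2 j]
      exact add_mem (mul_mem (mul_mem (memQ j) (memE j)) (memΩ j))
        (mul_mem (mul_mem (memQ j) (memE j)) (memΩ j))
    · rw [part4 j]
      exact mul_mem mem2 (mul_mem (mul_mem (memQ j) (sub_mem (memK j) (one_mem _))) (memΩ j))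
    · rw [add_comm, part4 j]
      exact mul_mem mem2 (mul_mem (mul_mem (memQ j) (sub_mem (memK j) (one_mem _))) (memΩ j))
    · rw [part3 j]
      exact add_mem (mul_mem (mul_mem (memQ j) (mul_mem (memK j) (memF j))) (memΩ j))
        (mul_mem (mul_mem (memQ j) (mul_mem (memK j) (memF j))) (memΩ j))
  · rw [part1 j k hne μ ν]
    exact zero_mem _


/-- In an `n`-fold U-system (tensor power of `U_i(sl₂)` at `q = i`) with invertible
Casimirs `Ω_j = iE_jF_j + K_j − K_j⁻¹`, the elements
`α_j¹ = K₁⋯K_{j−1}·E_j·Ω_j⁻¹` and `α_j² = K₁⋯K_{j−1}·(iK_jF_j)·Ω_j⁻¹` satisfy: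
(1) `α`'s with distinct lower indices anticommute;
(2) `(α_j¹)² = K₁²⋯K_{j−1}²·E_j²·Ω_j⁻²`;
(3) `(α_j²)² = K₁²⋯K_{j−1}²·K_j²F_j²·Ω_j⁻²`;
(4) `α_j¹α_j² + α_j²α_j¹ = 2·K₁²⋯K_{j−1}²·(K_j² − 1)·Ω_j⁻²`;
and all anticommutators of the `α`'s lie in the subalgebra generated by the
`K_j^{±2}, E_j², F_j², Ω_j⁻²`, so the `α`'s generate a Clifford algebra over it. -/
theorem stmt9 {A : Type*} [Ring A] [Algebra ℂ A] (n : ℕ)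
    (K Kinv E F Ωinv : Fin n → A)
    (hKinv : ∀ j, K j * Kinv j = 1 ∧ Kinv j * K j = 1)
    (hKE : ∀ j, K j * E j = -(E j * K j))
    (hKF : ∀ j, K j * F j = -(F j * K j))
    (hEF : ∀ j, E j * F j - F j * E j = (2 * Complex.I) • (K j - Kinv j))
    (hcomm : ∀ j k : Fin n, j ≠ k → ∀ x ∈ ({K j, Kinv j, E j, F j} : Set A),
      ∀ y ∈ ({K k, Kinv k, E k, F k} : Set A), Commute x y)
    (hΩinv : ∀ j, (Complex.I • (E j * F j) + K j - Kinv j) * Ωinv j = 1 ∧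
      Ωinv j * (Complex.I • (E j * F j) + K j - Kinv j) = 1)
    (α : Fin n → Fin 2 → A)
    (hα1 : ∀ j, α j 0 = (((List.finRange n).take j.1).map K).prod * E j * Ωinv j)
    (hα2 : ∀ j, α j 1 =
      (((List.finRange n).take j.1).map K).prod * (Complex.I • (K j * F j)) * Ωinv j) :
    (∀ j k : Fin n, j ≠ k → ∀ μ ν : Fin 2, α j μ * α k ν + α k ν * α j μ = 0) ∧
    (∀ j : Fin n, α j 0 * α j 0 =
      (((List.finRange n).take j.1).map (fun k => K k ^ 2)).prod * E j ^ 2 * Ωinv j ^ 2) ∧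
    (∀ j : Fin n, α j 1 * α j 1 =
      (((List.finRange n).take j.1).map (fun k => K k ^ 2)).prod * (K j ^ 2 * F j ^ 2) *
        Ωinv j ^ 2) ∧
    (∀ j : Fin n, α j 0 * α j 1 + α j 1 * α j 0 =
      2 * ((((List.finRange n).take j.1).map (fun k => K k ^ 2)).prod * (K j ^ 2 - 1) *
        Ωinv j ^ 2)) ∧
    (∀ j k : Fin n, ∀ μ ν : Fin 2, α j μ * α k ν + α k ν * α j μ ∈
      Algebra.adjoin ℂ
        (⋃ l : Fin n, ({K l ^ 2, Kinv l ^ 2, E l ^ 2, F l ^ 2, Ωinv l ^ 2} : Set A))) := by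
  have hab : α = alphaD K E F Ωinv := by
    funext j μ
    rcases (by decide : ∀ μ : Fin 2, μ = 0 ∨ μ = 1) μ with rfl | rfl
    · rw [hα1 j]; rfl
    · rw [hα2 j]; rfl
  rw [hab]
  exact stmt9_core n K Kinv E F Ωinv hKinv hKE hKF hEF hcomm hΩinv
end

section
/- Let n ≥ 2 and let (K_j, E_j, F_j), j = 1, …, n, be an n-fold U-system in an associative unital ℂ-algebra A in which each Casimir Ω_j := iE_jF_j + K_j − K_j⁻¹ is invertible. Set F̃_j := iK_jF_j, α_j¹ := K₁⋯K_{j−1}·E_j·Ω_j⁻¹, α_j² := K₁⋯K_{j−1}·F̃_j·Ω_j⁻¹, and β_j^ν := α_j^ν − α_{j+1}^ν for 1 ≤ j ≤ n−1. Define the coproduct elements ΔK := K₁K₂⋯Kₙ, ΔE := Σ_{j=1}^{n} E_j·K_{j+1}⋯Kₙ, ΔF := Σ_{j=1}^{n} K₁⁻¹⋯K_{j−1}⁻¹·F_j, ΔF̃ := i·ΔK·ΔF, and ΔΩ := i·ΔE·ΔF + ΔK − (ΔK)⁻¹. Then for every k ∈ {1, …, n−1} and ν ∈ {1,2}: ΔK·β_k^ν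 + β_k^ν·ΔK = 0, ΔE·β_k^ν = β_k^ν·ΔE, ΔF̃·β_k^ν = β_k^ν·ΔF̃, and ΔΩ·β_k^ν + β_k^ν·ΔΩ = 0; that is, the elements β_k^ν super-commute with the image of U_i(sl₂) under the iterated coproduct. -/
set_option linter.unusedSectionVars false
set_option maxHeartbeats 1000000


namespace Stmt10Aux

variable {A : Type*} [Ring A] [Algebra ℂ A] {n : ℕ}

/-- prefix product of `K` over indices `< m`. -/
def PK (K : Fin n → A) (m : ℕ) : A := (((List.finRange n).take m).map K).prod
/-- suffix product of `K` over indices `> m`. -/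
def RK (K : Fin n → A) (m : ℕ) : A := (((List.finRange n).drop (m + 1)).map K).prod
/-- twisted `F`. -/
def Ftd (K F : Fin n → A) (j : Fin n) : A := Complex.I • (K j * F j)
/-- the Casimir. -/
def Om (K Kinv E F : Fin n → A) (j : Fin n) : A :=
  Complex.I • (E j * F j) + K j - Kinv j

lemma PK_def (K : Fin n → A) (m : ℕ) : PK K m = (((List.finRange n).take m).map K).prod := rfl
lemma RK_def (K : Fin n → A) (m : ℕ) :
    RK K m = (((List.finRange n).drop (m + 1)).map K).prod := rfl

lemma mem_take_finRange {m : ℕ} {i : Fin n} (h : i ∈ (List.finRange n).take m) : i.1 < m := by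
  rw [List.mem_iff_getElem] at h
  obtain ⟨k, hk, he⟩ := h
  rw [List.getElem_take, List.getElem_finRange] at he
  subst he
  simp at hk ⊢
  omega

lemma mem_take_finRange' {m : ℕ} {i : Fin n} (h : i.1 < m) : i ∈ (List.finRange n).take m := by
  rw [List.mem_iff_getElem]
  refine ⟨i.1, by simp; omega, ?_⟩
  rw [List.getElem_take, List.getElem_finRange]
  simp

lemma mem_drop_finRange {m : ℕ} {i : Fin n} (h : i ∈ (List.finRange n).drop m) : m ≤ i.1 := by
  rw [List.mem_iff_getElem] at h
  obtain ⟨k, hk, he⟩ := h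
  rw [List.getElem_drop, List.getElem_finRange] at he
  subst he
  simp at hk ⊢

lemma mem_drop_finRange' {m : ℕ} {i : Fin n} (h : m ≤ i.1) : i ∈ (List.finRange n).drop m := by
  rw [List.mem_iff_getElem]
  refine ⟨i.1 - m, by simp; omega, ?_⟩
  rw [List.getElem_drop, List.getElem_finRange]
  apply Fin.ext
  simp
  omega

/-- commuting with every factor gives commuting with the product. -/
lemma prod_comm_of_forall {ι : Type*} (G : ι → A) (x : A) (l : List ι)
    (h : ∀ i ∈ l, Commute (G i) x) : Commute ((l.map G).prod) x := by
  induction l with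
  | nil => simp
  | cons a t ih =>
      simp only [List.map_cons, List.prod_cons]
      exact (h a (by simp)).mul_left (ih fun i hi => h i (by simp [hi]))

/-- anticommuting through a product with exactly one anticommuting (nodup) factor. -/
lemma prod_anti_of_single {ι : Type*} [DecidableEq ι] (G : ι → A) (x : A) (m : ι)
    (l : List ι) (hnd : l.Nodup) (hm : m ∈ l) (hbad : G m * x = -(x * G m))
    (hgood : ∀ i ∈ l, i ≠ m → Commute (G i) x) :
    (l.map G).prod * x = -(x * (l.map G).prod) := by
  induction l with
  | nil => simp at hm
  | cons a t ih =>
      simp only [List.map_cons, List.prod_cons]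
      rcases eq_or_ne a m with rfl | hne
      · have hmt : a ∉ t := (List.nodup_cons.mp hnd).1
        have hc : Commute ((t.map G).prod) x :=
          prod_comm_of_forall G x t fun i hi =>
            hgood i (by simp [hi]) (fun h => hmt (h ▸ hi))
        calc G a * (t.map G).prod * x = G a * ((t.map G).prod * x) := by rw [mul_assoc]
          _ = G a * (x * (t.map G).prod) := by rw [hc]
          _ = (G a * x) * (t.map G).prod := by rw [mul_assoc]
          _ = -(x * G a) * (t.map G).prod := by rw [hbad]
          _ = -(x * (G a * (t.map G).prod)) := by noncomm_ring
      · have hmt : m ∈ t := by rcases List.mem_cons.mp hm with h | h; exact absurd h.symm hne; exact h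
        have ht := ih (List.nodup_cons.mp hnd).2 hmt fun i hi hin => hgood i (by simp [hi]) hin
        have ha : Commute (G a) x := hgood a (by simp) hne
        calc G a * (t.map G).prod * x = G a * ((t.map G).prod * x) := by rw [mul_assoc]
          _ = G a * -(x * (t.map G).prod) := by rw [ht]
          _ = -((G a * x) * (t.map G).prod) := by noncomm_ring
          _ = -((x * G a) * (t.map G).prod) := by rw [ha]
          _ = -(x * (G a * (t.map G).prod)) := by noncomm_ring

lemma prod_mul_prod_inv {ι : Type*} (G Gi : ι → A) (l : List ι)
    (hinv : ∀ i ∈ l, G i * Gi i = 1)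
    (hc : ∀ i j, Commute (Gi i) (G j)) :
    (l.map G).prod * (l.map Gi).prod = 1 := by
  induction l with
  | nil => simp
  | cons a t ih =>
      simp only [List.map_cons, List.prod_cons]
      have h1 : Commute (Gi a) ((t.map G).prod) :=
        (prod_comm_of_forall G (Gi a) t fun i _ => (hc a i).symm).symm
      calc G a * (t.map G).prod * (Gi a * (t.map Gi).prod)
          = G a * ((t.map G).prod * Gi a) * (t.map Gi).prod := by noncomm_ring
        _ = G a * (Gi a * (t.map G).prod) * (t.map Gi).prod := by rw [← h1]
        _ = (G a * Gi a) * ((t.map G).prod * (t.map Gi).prod) := by noncomm_ring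
        _ = 1 := by rw [hinv a (by simp), ih fun i hi => hinv i (by simp [hi]), mul_one]

lemma commute_of_inv {a b w : A} (h1 : a * w = 1) (h2 : w * a = 1)
    (h : Commute a b) : Commute w b := by
  have : w * b = w * b * (a * w) := by rw [h1, mul_one]
  calc w * b = w * (b * a) * w := by rw [this]; noncomm_ring
    _ = w * (a * b) * w := by rw [h.eq]
    _ = (w * a) * (b * w) := by noncomm_ring
    _ = b * w := by rw [h2, one_mul]

end Stmt10Aux

namespace Stmt10Aux
section Site
variable {A : Type*} [Ring A] [Algebra ℂ A] (e f k ki : A)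
  (hki : k * ki = 1) (hik : ki * k = 1)
  (hke : k * e = -(e * k)) (hkf : k * f = -(f * k))
  (hef : e * f - f * e = (2 * Complex.I) • (k - ki))

lemma hII : Complex.I * (2 * Complex.I) = -2 := by
  rw [show (Complex.I:ℂ) * (2*Complex.I) = 2*(Complex.I*Complex.I) by ring, Complex.I_mul_I]
  ring

include hki hik hke in
lemma site_kie : ki * e = -(e * ki) := by
  have hek : e * k = -(k * e) := by rw [hke, neg_neg]
  calc ki * e = ki * (e * (k * ki)) := by rw [hki, mul_one]
    _ = ki * (e * k) * ki := by noncomm_ring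
    _ = ki * (-(k * e)) * ki := by rw [hek]
    _ = -((ki * k) * (e * ki)) := by noncomm_ring
    _ = -(e * ki) := by rw [hik, one_mul]

include hki hik hke hef in
lemma site_omega_e :
    (Complex.I • (e * f) + k - ki) * e = e * (Complex.I • (e * f) + k - ki) := by
  have hkie := site_kie e k ki hki hik hke
  have hfe : f * e = e * f - (2 * Complex.I) • (k - ki) := by rw [← hef]; noncomm_ring
  have h1 : (Complex.I • (e * f) + k - ki) * e
      = Complex.I • (e * (f * e)) + k * e - ki * e := by
    simp only [add_mul, sub_mul, smul_mul_assoc, mul_assoc]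
  rw [h1, hfe, hke, hkie]
  simp only [mul_sub, mul_add, mul_smul_comm, smul_sub, smul_add, smul_smul, hII]
  module

include hki hik hkf hef in
lemma site_omega_f :
    (Complex.I • (e * f) + k - ki) * f = f * (Complex.I • (e * f) + k - ki) := by
  have hkif := site_kie f k ki hki hik hkf
  have hfe : f * e = e * f - (2 * Complex.I) • (k - ki) := by rw [← hef]; noncomm_ring
  have h2 : f * (e * f) = (e * f) * f - (2 * Complex.I) • ((k - ki) * f) := by
    calc f * (e * f) = (f * e) * f := by rw [mul_assoc]
      _ = (e * f - (2 * Complex.I) • (k - ki)) * f := by rw [hfe]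
      _ = (e * f) * f - (2 * Complex.I) • ((k - ki) * f) := by
          rw [sub_mul, smul_mul_assoc]
  have h3 : f * (Complex.I • (e * f) + k - ki)
      = Complex.I • (f * (e * f)) + f * k - f * ki := by
    simp only [mul_add, mul_sub, mul_smul_comm]
  rw [h3, h2]
  have h4 : (Complex.I • (e * f) + k - ki) * f
      = Complex.I • ((e * f) * f) + k * f - ki * f := by
    simp only [add_mul, sub_mul, smul_mul_assoc]
  rw [h4, hkf, hkif]
  simp only [sub_mul, smul_sub, smul_smul, hII, hkf, hkif]
  module

include hki hik hke hkf in
lemma site_omega_k :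
    (Complex.I • (e * f) + k - ki) * k = k * (Complex.I • (e * f) + k - ki) := by
  have hek : e * k = -(k * e) := by rw [hke, neg_neg]
  have h : (e * f) * k = k * (e * f) := by
    calc (e * f) * k = e * (f * k) := by rw [mul_assoc]
      _ = e * (-(k * f)) := by rw [show f * k = -(k*f) by rw [hkf, neg_neg]]
      _ = -((e * k) * f) := by noncomm_ring
      _ = -((-(k * e)) * f) := by rw [hek]
      _ = k * (e * f) := by noncomm_ring
  simp only [add_mul, sub_mul, mul_add, mul_sub, smul_mul_assoc, mul_smul_comm, h, hki, hik]

include hki hik hke hkf in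
lemma site_omega_ki :
    (Complex.I • (e * f) + k - ki) * ki = ki * (Complex.I • (e * f) + k - ki) := by
  have hkie := site_kie e k ki hki hik hke
  have hkif := site_kie f k ki hki hik hkf
  have heki : e * ki = -(ki * e) := by rw [hkie, neg_neg]
  have h : (e * f) * ki = ki * (e * f) := by
    calc (e * f) * ki = e * (f * ki) := by rw [mul_assoc]
      _ = e * (-(ki * f)) := by rw [show f * ki = -(ki*f) by rw [hkif, neg_neg]]
      _ = -((e * ki) * f) := by noncomm_ring
      _ = -((-(ki * e)) * f) := by rw [heki]
      _ = ki * (e * f) := by noncomm_ring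
  simp only [add_mul, sub_mul, mul_add, mul_sub, smul_mul_assoc, mul_smul_comm, h, hki, hik]

include hki hik hke hkf hef in
lemma site_eFt :
    e * (Complex.I • (k * f)) = (Complex.I • (k * f)) * e
      - (2:ℂ) • (k * (Complex.I • (e * f) + k - ki)) := by
  have hek : e * k = -(k * e) := by rw [hke, neg_neg]
  have hfe : f * e = e * f - (2 * Complex.I) • (k - ki) := by rw [← hef]; noncomm_ring
  have h1 : e * (Complex.I • (k * f)) = (-Complex.I) • (k * (e * f)) := by
    calc e * (Complex.I • (k * f)) = Complex.I • ((e * k) * f) := by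
          rw [mul_smul_comm, mul_assoc]
      _ = Complex.I • ((-(k * e)) * f) := by rw [hek]
      _ = (-Complex.I) • (k * (e * f)) := by
          rw [neg_mul, mul_assoc, smul_neg, neg_smul]
  have h2 : (Complex.I • (k * f)) * e
      = Complex.I • (k * (e * f)) + (2:ℂ) • (k * k) - (2:ℂ) • (k * ki) := by
    calc (Complex.I • (k * f)) * e = Complex.I • (k * (f * e)) := by
          rw [smul_mul_assoc, mul_assoc]
      _ = Complex.I • (k * (e * f - (2 * Complex.I) • (k - ki))) := by rw [hfe]
      _ = _ := by
          simp only [mul_sub, mul_smul_comm, smul_sub, smul_smul, hII]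
          module
  rw [h1, h2]
  simp only [mul_add, mul_sub, mul_smul_comm, smul_add, smul_sub, smul_smul, hki]
  module

include hkf in
lemma site_aKFt : k * (Complex.I • (k * f)) = -((Complex.I • (k * f)) * k) := by
  have hfk : f * k = -(k * f) := by rw [hkf, neg_neg]
  calc k * (Complex.I • (k * f)) = Complex.I • (k * (k * f)) := by rw [mul_smul_comm]
    _ = -((Complex.I • (k * f)) * k) := by
        rw [smul_mul_assoc, mul_assoc, hfk]
        simp only [mul_neg, smul_neg, neg_neg]

end Site
end Stmt10Aux

open Stmt10Aux

/-- Schur–Weyl super-commutation: in an `n`-fold U-system (`n ≥ 2`) with invertible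
Casimirs, the elements `β_k^ν = α_k^ν − α_{k+1}^ν` (with
`α_j¹ = K₁⋯K_{j−1}·E_j·Ω_j⁻¹`, `α_j² = K₁⋯K_{j−1}·(iK_jF_j)·Ω_j⁻¹`) anticommute with
`ΔK` and `ΔΩ` and commute with `ΔE` and `ΔF̃ = i·ΔK·ΔF`, where `ΔK, ΔE, ΔF` are the
iterated coproduct elements of `U_i(sl₂)` and `ΔΩ = i·ΔE·ΔF + ΔK − (ΔK)⁻¹`. -/

theorem stmt10 {A : Type*} [Ring A] [Algebra ℂ A] (n : ℕ) (hn : 2 ≤ n)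
    (K Kinv E F Ωinv : Fin n → A)
    (hKinv : ∀ j, K j * Kinv j = 1 ∧ Kinv j * K j = 1)
    (hKE : ∀ j, K j * E j = -(E j * K j))
    (hKF : ∀ j, K j * F j = -(F j * K j))
    (hEF : ∀ j, E j * F j - F j * E j = (2 * Complex.I) • (K j - Kinv j))
    (hcomm : ∀ j k : Fin n, j ≠ k → ∀ x ∈ ({K j, Kinv j, E j, F j} : Set A),
      ∀ y ∈ ({K k, Kinv k, E k, F k} : Set A), Commute x y)
    (hΩinv : ∀ j, (Complex.I • (E j * F j) + K j - Kinv j) * Ωinv j = 1 ∧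
      Ωinv j * (Complex.I • (E j * F j) + K j - Kinv j) = 1)
    (α : Fin n → Fin 2 → A)
    (hα1 : ∀ j, α j 0 = (((List.finRange n).take j.1).map K).prod * E j * Ωinv j)
    (hα2 : ∀ j, α j 1 =
      (((List.finRange n).take j.1).map K).prod * (Complex.I • (K j * F j)) * Ωinv j)
    (β : Fin (n - 1) → Fin 2 → A)
    (hβ : ∀ (k : Fin (n - 1)) (ν : Fin 2),
      β k ν = α (⟨k.1, by have := k.isLt; omega⟩ : Fin n) ν -
        α (⟨k.1 + 1, by have := k.isLt; omega⟩ : Fin n) ν)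
    (ΔK ΔKinv ΔE ΔF ΔFt ΔΩ : A)
    (hΔK : ΔK = ((List.finRange n).map K).prod)
    (hΔKinv : ΔK * ΔKinv = 1 ∧ ΔKinv * ΔK = 1)
    (hΔE : ΔE = ∑ j : Fin n, E j * (((List.finRange n).drop (j.1 + 1)).map K).prod)
    (hΔF : ΔF = ∑ j : Fin n, (((List.finRange n).take j.1).map Kinv).prod * F j)
    (hΔFt : ΔFt = Complex.I • (ΔK * ΔF))
    (hΔΩ : ΔΩ = Complex.I • (ΔE * ΔF) + ΔK - ΔKinv) :
    ∀ (k : Fin (n - 1)) (ν : Fin 2),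
      ΔK * β k ν + β k ν * ΔK = 0 ∧
      ΔE * β k ν = β k ν * ΔE ∧
      ΔFt * β k ν = β k ν * ΔFt ∧
      ΔΩ * β k ν + β k ν * ΔΩ = 0 := by
  classical
  -- restated hypotheses through abbreviations
  have hα1' : ∀ j, α j 0 = PK K j.1 * E j * Ωinv j := hα1
  have hα2' : ∀ j, α j 1 = PK K j.1 * (Complex.I • (K j * F j)) * Ωinv j := hα2
  have hα0 : ∀ (j : Fin n) (h : 0 < 2), α j ⟨0, h⟩ = PK K j.1 * E j * Ωinv j :=
    fun j _ => hα1' j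
  have hα1b : ∀ (j : Fin n) (h : 1 < 2),
      α j ⟨1, h⟩ = PK K j.1 * (Complex.I • (K j * F j)) * Ωinv j := fun j _ => hα2' j
  have hΔE' : ΔE = ∑ j : Fin n, E j * RK K j.1 := hΔE
  have hΔF' : ΔF = ∑ j : Fin n, PK Kinv j.1 * F j := hΔF
  -- basic cross-site commutation facts
  have cKK : ∀ i j : Fin n, Commute (K i) (K j) := by
    intro i j
    rcases eq_or_ne i j with rfl | h
    · exact Commute.refl _
    · exact hcomm i j h _ (by simp) _ (by simp)
  have cKiK : ∀ i j : Fin n, Commute (Kinv i) (K j) := by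
    intro i j
    rcases eq_or_ne i j with rfl | h
    · show Kinv i * K i = K i * Kinv i
      rw [(hKinv i).2, (hKinv i).1]
    · exact hcomm i j h _ (by simp) _ (by simp)
  have cKE : ∀ i j : Fin n, i ≠ j → Commute (K i) (E j) :=
    fun i j h => hcomm i j h _ (by simp) _ (by simp)
  have cKF : ∀ i j : Fin n, i ≠ j → Commute (K i) (F j) :=
    fun i j h => hcomm i j h _ (by simp) _ (by simp)
  have cKFt : ∀ i j : Fin n, i ≠ j → Commute (K i) (Complex.I • (K j * F j)) :=
    fun i j h => ((cKK i j).mul_right (cKF i j h)).smul_right _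
  have cEE : ∀ i j : Fin n, Commute (E i) (E j) := by
    intro i j
    rcases eq_or_ne i j with rfl | h
    · exact Commute.refl _
    · exact hcomm i j h _ (by simp) _ (by simp)
  have cFtE : ∀ i j : Fin n, i ≠ j → Commute (Complex.I • (K i * F i)) (E j) :=
    fun i j h => (((hcomm i j h _ (by simp) _ (by simp)).mul_left
      (hcomm i j h _ (by simp) _ (by simp))).smul_left _)
  have cEFt : ∀ i j : Fin n, i ≠ j → Commute (E i) (Complex.I • (K j * F j)) :=
    fun i j h => (cFtE j i h.symm).symm
  have cFtFt : ∀ i j : Fin n, Commute (Complex.I • (K i * F i)) (Complex.I • (K j * F j)) := by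
    intro i j
    rcases eq_or_ne i j with rfl | h
    · exact Commute.refl _
    · have a : Commute (K i) (K j * F j) :=
        (cKK i j).mul_right (cKF i j h)
      have b : Commute (F i) (K j * F j) :=
        (hcomm i j h _ (by simp) _ (by simp)).mul_right (hcomm i j h _ (by simp) _ (by simp))
      exact ((a.mul_left b).smul_left _).smul_right _
  -- the Casimir commutes with everything
  have cOmX : ∀ (j i : Fin n) (x : A), x ∈ ({K i, Kinv i, E i, F i} : Set A) →
      Commute (Complex.I • (E j * F j) + K j - Kinv j) x := by
    intro j i x hx
    rcases eq_or_ne j i with rfl | h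
    · simp only [Set.mem_insert_iff, Set.mem_singleton_iff] at hx
      rcases hx with rfl | rfl | rfl | rfl
      · exact site_omega_k (E j) (F j) (K j) (Kinv j) (hKinv j).1 (hKinv j).2 (hKE j) (hKF j)
      · exact site_omega_ki (E j) (F j) (K j) (Kinv j) (hKinv j).1 (hKinv j).2 (hKE j) (hKF j)
      · exact site_omega_e (E j) (F j) (K j) (Kinv j) (hKinv j).1 (hKinv j).2 (hKE j) (hEF j)
      · exact site_omega_f (E j) (F j) (K j) (Kinv j) (hKinv j).1 (hKinv j).2 (hKF j) (hEF j)
    · have h1 : Commute (E j) x := hcomm j i h _ (by simp) _ hx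
      have h2 : Commute (F j) x := hcomm j i h _ (by simp) _ hx
      have h3 : Commute (K j) x := hcomm j i h _ (by simp) _ hx
      have h4 : Commute (Kinv j) x := hcomm j i h _ (by simp) _ hx
      exact (((h1.mul_left h2).smul_left _).add_left h3).sub_left h4
  have cW : ∀ (j i : Fin n) (x : A), x ∈ ({K i, Kinv i, E i, F i} : Set A) →
      Commute (Ωinv j) x :=
    fun j i x hx => commute_of_inv (hΩinv j).1 (hΩinv j).2 (cOmX j i x hx)
  have cWK : ∀ j i : Fin n, Commute (Ωinv j) (K i) := fun j i => cW j i _ (by simp)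
  have cWE : ∀ j i : Fin n, Commute (Ωinv j) (E i) := fun j i => cW j i _ (by simp)
  have cWF : ∀ j i : Fin n, Commute (Ωinv j) (F i) := fun j i => cW j i _ (by simp)
  have cWFt : ∀ j i : Fin n, Commute (Ωinv j) (Complex.I • (K i * F i)) :=
    fun j i => ((cWK j i).mul_right (cWF j i)).smul_right _
  -- commutation with prefix and suffix products
  have cPx : ∀ (m : ℕ) (x : A), (∀ i : Fin n, i.1 < m → Commute (K i) x) →
      Commute (PK K m) x :=
    fun m x h => prod_comm_of_forall K x _ (fun i hi => h i (mem_take_finRange hi))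
  have cPix : ∀ (m : ℕ) (x : A), (∀ i : Fin n, i.1 < m → Commute (Kinv i) x) →
      Commute (PK Kinv m) x :=
    fun m x h => prod_comm_of_forall Kinv x _ (fun i hi => h i (mem_take_finRange hi))
  have cRx : ∀ (m : ℕ) (x : A), (∀ i : Fin n, m < i.1 → Commute (K i) x) →
      Commute (RK K m) x :=
    fun m x h => prod_comm_of_forall K x _ (fun i hi => h i (mem_drop_finRange hi))
  have aPx : ∀ (m : ℕ) (b : Fin n) (x : A), b.1 < m → K b * x = -(x * K b) →
      (∀ i : Fin n, i ≠ b → Commute (K i) x) → PK K m * x = -(x * PK K m) :=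
    fun m b x hbm hb h => prod_anti_of_single K x b _
      (((List.finRange n).take_sublist m).nodup (List.nodup_finRange n))
      (mem_take_finRange' hbm) hb (fun i _ hib => h i hib)
  have aRx : ∀ (m : ℕ) (b : Fin n) (x : A), m < b.1 → K b * x = -(x * K b) →
      (∀ i : Fin n, i ≠ b → Commute (K i) x) → RK K m * x = -(x * RK K m) :=
    fun m b x hbm hb h => prod_anti_of_single K x b _
      (((List.finRange n).drop_sublist (m+1)).nodup (List.nodup_finRange n))
      (mem_drop_finRange' hbm) hb (fun i _ hib => h i hib)
  have cRP : ∀ m m' : ℕ, Commute (RK K m) (PK K m') :=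
    fun m m' => cRx m _ (fun i _ => (cPx m' (K i) (fun i' _ => cKK i' i)).symm)
  have cWR : ∀ (j : Fin n) (m : ℕ), Commute (Ωinv j) (RK K m) :=
    fun j m => (cRx m _ (fun i _ => (cWK j i).symm)).symm
  -- the main exchange computation for off-diagonal / commuting terms
  have keyterm : ∀ (j m : Fin n) (x y : A),
      K j * x = -(x * K j) → (∀ i : Fin n, i ≠ j → Commute (K i) x) →
      K m * y = -(y * K m) → (∀ i : Fin n, i ≠ m → Commute (K i) y) →
      Commute y x → Commute (Ωinv j) x → Commute (Ωinv j) y →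
      (y * RK K m.1) * (PK K j.1 * x * Ωinv j)
        = (PK K j.1 * x * Ωinv j) * (y * RK K m.1) := by
    intro j m x y hjx hcx hmy hcy hyx hwx hwy
    rcases lt_or_ge m.1 j.1 with hlt | hge
    · have hPy : PK K j.1 * y = -(y * PK K j.1) := aPx j.1 m y hlt hmy hcy
      have hyP : y * PK K j.1 = -(PK K j.1 * y) := by rw [hPy, neg_neg]
      have hRx : RK K m.1 * x = -(x * RK K m.1) := aRx m.1 j x hlt hjx hcx
      calc (y * RK K m.1) * (PK K j.1 * x * Ωinv j)
          = y * (RK K m.1 * PK K j.1) * x * Ωinv j := by noncomm_ring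
        _ = y * (PK K j.1 * RK K m.1) * x * Ωinv j := by rw [(cRP m.1 j.1).eq]
        _ = (y * PK K j.1) * (RK K m.1 * x) * Ωinv j := by noncomm_ring
        _ = (-(PK K j.1 * y)) * (-(x * RK K m.1)) * Ωinv j := by rw [hyP, hRx]
        _ = PK K j.1 * (y * x) * (RK K m.1 * Ωinv j) := by noncomm_ring
        _ = PK K j.1 * (x * y) * (Ωinv j * RK K m.1) := by rw [hyx.eq, (cWR j m.1).eq]
        _ = PK K j.1 * x * ((y * Ωinv j) * RK K m.1) := by noncomm_ring
        _ = PK K j.1 * x * ((Ωinv j * y) * RK K m.1) := by rw [← hwy.eq]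
        _ = (PK K j.1 * x * Ωinv j) * (y * RK K m.1) := by noncomm_ring
    · have cPy : Commute (PK K j.1) y :=
        cPx _ _ (fun i hi => hcy i (Fin.ne_of_val_ne (by omega)))
      have cRxc : Commute (RK K m.1) x :=
        cRx _ _ (fun i hi => hcx i (Fin.ne_of_val_ne (by omega)))
      calc (y * RK K m.1) * (PK K j.1 * x * Ωinv j)
          = y * (RK K m.1 * PK K j.1) * (x * Ωinv j) := by noncomm_ring
        _ = y * (PK K j.1 * RK K m.1) * (x * Ωinv j) := by rw [(cRP m.1 j.1).eq]
        _ = (y * PK K j.1) * ((RK K m.1 * x) * Ωinv j) := by noncomm_ring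
        _ = (PK K j.1 * y) * ((x * RK K m.1) * Ωinv j) := by rw [← cPy.eq, cRxc.eq]
        _ = PK K j.1 * (y * x) * (RK K m.1 * Ωinv j) := by noncomm_ring
        _ = PK K j.1 * (x * y) * (Ωinv j * RK K m.1) := by rw [hyx.eq, (cWR j m.1).eq]
        _ = PK K j.1 * x * ((y * Ωinv j) * RK K m.1) := by noncomm_ring
        _ = PK K j.1 * x * ((Ωinv j * y) * RK K m.1) := by rw [← hwy.eq]
        _ = (PK K j.1 * x * Ωinv j) * (y * RK K m.1) := by noncomm_ring
  -- the diagonal term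
  have hspecial : ∀ (j : Fin n) (x y : A),
      (∀ i : Fin n, i ≠ j → Commute (K i) x) → (∀ i : Fin n, i ≠ j → Commute (K i) y) →
      Commute (Ωinv j) x → Commute (Ωinv j) y →
      (y * RK K j.1) * (PK K j.1 * x * Ωinv j) - (PK K j.1 * x * Ωinv j) * (y * RK K j.1)
        = PK K j.1 * ((y * x - x * y) * Ωinv j) * RK K j.1 := by
    intro j x y hcx hcy hwx hwy
    have cPy : Commute (PK K j.1) y :=
      cPx _ _ (fun i hi => hcy i (Fin.ne_of_val_ne (by omega)))
    have cRxc : Commute (RK K j.1) x :=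
      cRx _ _ (fun i hi => hcx i (Fin.ne_of_val_ne (by omega)))
    have cRy : Commute (RK K j.1) y :=
      cRx _ _ (fun i hi => hcy i (Fin.ne_of_val_ne (by omega)))
    have h1 : (y * RK K j.1) * (PK K j.1 * x * Ωinv j)
        = PK K j.1 * ((y * x) * Ωinv j) * RK K j.1 := by
      calc (y * RK K j.1) * (PK K j.1 * x * Ωinv j)
          = y * (RK K j.1 * PK K j.1) * (x * Ωinv j) := by noncomm_ring
        _ = y * (PK K j.1 * RK K j.1) * (x * Ωinv j) := by rw [(cRP j.1 j.1).eq]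
        _ = (y * PK K j.1) * ((RK K j.1 * x) * Ωinv j) := by noncomm_ring
        _ = (PK K j.1 * y) * ((x * RK K j.1) * Ωinv j) := by rw [← cPy.eq, cRxc.eq]
        _ = PK K j.1 * (y * x) * (RK K j.1 * Ωinv j) := by noncomm_ring
        _ = PK K j.1 * (y * x) * (Ωinv j * RK K j.1) := by rw [(cWR j j.1).eq]
        _ = PK K j.1 * ((y * x) * Ωinv j) * RK K j.1 := by noncomm_ring
    have h2 : (PK K j.1 * x * Ωinv j) * (y * RK K j.1)
        = PK K j.1 * ((x * y) * Ωinv j) * RK K j.1 := by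
      calc (PK K j.1 * x * Ωinv j) * (y * RK K j.1)
          = PK K j.1 * x * ((Ωinv j * y) * RK K j.1) := by noncomm_ring
        _ = PK K j.1 * x * ((y * Ωinv j) * RK K j.1) := by rw [hwy.eq]
        _ = PK K j.1 * ((x * y) * Ωinv j) * RK K j.1 := by noncomm_ring
    rw [h1, h2]
    noncomm_ring
  -- splitting the full product at one site
  have hsplit : ∀ j : Fin n, ((List.finRange n).map K).prod = PK K j.1 * (K j * RK K j.1) := by
    intro j
    have h2 : (List.finRange n).drop j.1 = j :: (List.finRange n).drop (j.1+1) := by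
      rw [List.drop_eq_getElem_cons (by simpa using j.isLt)]
      simp
    conv_lhs => rw [← List.take_append_drop j.1 (List.finRange n)]
    rw [h2, List.map_append, List.prod_append, List.map_cons, List.prod_cons]
    rfl
  have hPPinv : ∀ m : ℕ, PK K m * PK Kinv m = 1 :=
    fun m => prod_mul_prod_inv K Kinv _ (fun i _ => (hKinv i).1) (fun i j => cKiK i j)
  -- the sum expansion of ΔFt
  have hFtsum : ΔFt = ∑ m : Fin n, (Complex.I • (K m * F m)) * RK K m.1 := by
    rw [hΔFt, hΔF', Finset.mul_sum, Finset.smul_sum]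
    refine Finset.sum_congr rfl (fun m _ => ?_)
    have c1 : Commute (PK Kinv m.1) (K m * RK K m.1) :=
      cPix _ _ (fun i _ => (cKiK i m).mul_right
        ((cRx m.1 (Kinv i) (fun i' _ => (cKiK i i').symm)).symm))
    have cRF : Commute (RK K m.1) (F m) :=
      cRx _ _ (fun i hi => cKF i m (Fin.ne_of_val_ne (by omega)))
    rw [hΔK, hsplit m]
    calc Complex.I • ((PK K m.1 * (K m * RK K m.1)) * (PK Kinv m.1 * F m))
        = Complex.I • ((PK K m.1 * ((K m * RK K m.1) * PK Kinv m.1)) * F m) := by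
          congr 1; noncomm_ring
      _ = Complex.I • ((PK K m.1 * (PK Kinv m.1 * (K m * RK K m.1))) * F m) := by
          rw [← c1.eq]
      _ = Complex.I • (((PK K m.1 * PK Kinv m.1) * (K m * RK K m.1)) * F m) := by
          congr 1; noncomm_ring
      _ = Complex.I • (K m * (RK K m.1 * F m)) := by
          rw [hPPinv m.1, one_mul, mul_assoc]
      _ = Complex.I • (K m * (F m * RK K m.1)) := by rw [cRF.eq]
      _ = (Complex.I • (K m * F m)) * RK K m.1 := by
          rw [smul_mul_assoc, mul_assoc]
  -- diagonal core identities
  have hcoreE : ∀ j : Fin n,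
      (E j * (Complex.I • (K j * F j)) - (Complex.I • (K j * F j)) * E j) * Ωinv j
        = (-2:ℂ) • K j := by
    intro j
    have hsx := site_eFt (E j) (F j) (K j) (Kinv j) (hKinv j).1 (hKinv j).2 (hKE j) (hKF j) (hEF j)
    have h1 : E j * (Complex.I • (K j * F j)) - (Complex.I • (K j * F j)) * E j
        = (-2:ℂ) • (K j * (Complex.I • (E j * F j) + K j - Kinv j)) := by
      rw [hsx]; module
    rw [h1, smul_mul_assoc, mul_assoc, (hΩinv j).1, mul_one]
  have hcoreFt : ∀ j : Fin n,
      ((Complex.I • (K j * F j)) * E j - E j * (Complex.I • (K j * F j))) * Ωinv j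
        = (2:ℂ) • K j := by
    intro j
    have hsx := site_eFt (E j) (F j) (K j) (Kinv j) (hKinv j).1 (hKinv j).2 (hKE j) (hKF j) (hEF j)
    have h1 : (Complex.I • (K j * F j)) * E j - E j * (Complex.I • (K j * F j))
        = (2:ℂ) • (K j * (Complex.I • (E j * F j) + K j - Kinv j)) := by
      rw [hsx]; module
    rw [h1, smul_mul_assoc, mul_assoc, (hΩinv j).1, mul_one]
  -- ΔK anticommutes with every α
  have hKαν : ∀ (j : Fin n) (ν : Fin 2), ΔK * α j ν = -(α j ν * ΔK) := by
    have main : ∀ (j : Fin n) (x : A), K j * x = -(x * K j) →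
        (∀ i : Fin n, i ≠ j → Commute (K i) x) → Commute (Ωinv j) x →
        ΔK * (PK K j.1 * x * Ωinv j) = -((PK K j.1 * x * Ωinv j) * ΔK) := by
      intro j x hx hcx hwx
      have cKP : Commute ΔK (PK K j.1) := by
        rw [hΔK]
        exact prod_comm_of_forall K _ _
          (fun i _ => (cPx j.1 (K i) (fun i' _ => cKK i' i)).symm)
      have cKW : Commute ΔK (Ωinv j) := by
        rw [hΔK]
        exact prod_comm_of_forall K _ _ (fun i _ => (cWK j i).symm)
      have aK : ΔK * x = -(x * ΔK) := by
        rw [hΔK]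
        exact prod_anti_of_single K x j _ (List.nodup_finRange n) (List.mem_finRange j)
          hx (fun i _ hij => hcx i hij)
      calc ΔK * (PK K j.1 * x * Ωinv j) = (ΔK * PK K j.1) * x * Ωinv j := by noncomm_ring
        _ = (PK K j.1 * ΔK) * x * Ωinv j := by rw [cKP.eq]
        _ = PK K j.1 * (ΔK * x) * Ωinv j := by noncomm_ring
        _ = PK K j.1 * (-(x * ΔK)) * Ωinv j := by rw [aK]
        _ = -(PK K j.1 * x * (ΔK * Ωinv j)) := by noncomm_ring
        _ = -(PK K j.1 * x * (Ωinv j * ΔK)) := by rw [cKW.eq]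
        _ = -((PK K j.1 * x * Ωinv j) * ΔK) := by noncomm_ring
    intro j ν
    obtain ⟨nv, hv⟩ := ν
    interval_cases nv
    · rw [hα0 j hv]
      exact main j (E j) (hKE j) (fun i hi => cKE i j hi) (cWE j j)
    · rw [hα1b j hv]
      exact main j (Complex.I • (K j * F j)) (site_aKFt (F j) (K j) (hKF j))
        (fun i hi => cKFt i j hi) (cWFt j j)
  -- ΔE versus α
  have hEαν : ∀ (j : Fin n) (ν : Fin 2),
      ΔE * α j ν = α j ν * ΔE + (if ν = 1 then (-2:ℂ) • ΔK else 0) := by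
    intro j ν
    obtain ⟨nv, hv⟩ := ν
    interval_cases nv
    · rw [if_neg (show ¬((⟨0, hv⟩ : Fin 2) = 1) by simp [Fin.ext_iff]), add_zero, hα0 j hv, hΔE', Finset.sum_mul, Finset.mul_sum]
      exact Finset.sum_congr rfl (fun m _ => keyterm j m (E j) (E m)
        (hKE j) (fun i hi => cKE i j hi) (hKE m) (fun i hi => cKE i m hi)
        (cEE m j) (cWE j j) (cWE j m))
    · rw [if_pos (show ((⟨1, hv⟩ : Fin 2) = 1) by rfl), hα1b j hv, hΔE', Finset.sum_mul, Finset.mul_sum]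
      have hterm : ∀ m : Fin n,
          (E m * RK K m.1) * (PK K j.1 * (Complex.I • (K j * F j)) * Ωinv j)
            = (PK K j.1 * (Complex.I • (K j * F j)) * Ωinv j) * (E m * RK K m.1)
              + (if m = j then (-2:ℂ) • ΔK else 0) := by
        intro m
        rcases eq_or_ne m j with rfl | hne
        · rw [if_pos rfl]
          refine sub_eq_iff_eq_add'.mp ?_
          rw [hspecial m (Complex.I • (K m * F m)) (E m) (fun i hi => cKFt i m hi)
            (fun i hi => cKE i m hi) (cWFt m m) (cWE m m), hcoreE m, hΔK, hsplit m,
            mul_smul_comm, smul_mul_assoc, mul_assoc]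
        · rw [if_neg hne, add_zero]
          exact keyterm j m (Complex.I • (K j * F j)) (E m)
            (site_aKFt (F j) (K j) (hKF j)) (fun i hi => cKFt i j hi)
            (hKE m) (fun i hi => cKE i m hi) (cEFt m j hne) (cWFt j j) (cWE j m)
      rw [Finset.sum_congr rfl (fun m _ => hterm m), Finset.sum_add_distrib,
        Finset.sum_ite_eq' Finset.univ j]
      simp
  -- ΔFt versus α
  have hFtαν : ∀ (j : Fin n) (ν : Fin 2),
      ΔFt * α j ν = α j ν * ΔFt + (if ν = 0 then (2:ℂ) • ΔK else 0) := by
    intro j ν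
    obtain ⟨nv, hv⟩ := ν
    interval_cases nv
    · rw [if_pos (show ((⟨0, hv⟩ : Fin 2) = 0) by rfl), hα0 j hv, hFtsum, Finset.sum_mul, Finset.mul_sum]
      have hterm : ∀ m : Fin n,
          ((Complex.I • (K m * F m)) * RK K m.1) * (PK K j.1 * E j * Ωinv j)
            = (PK K j.1 * E j * Ωinv j) * ((Complex.I • (K m * F m)) * RK K m.1)
              + (if m = j then (2:ℂ) • ΔK else 0) := by
        intro m
        rcases eq_or_ne m j with rfl | hne
        · rw [if_pos rfl]
          refine sub_eq_iff_eq_add'.mp ?_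
          rw [hspecial m (E m) (Complex.I • (K m * F m)) (fun i hi => cKE i m hi)
            (fun i hi => cKFt i m hi) (cWE m m) (cWFt m m), hcoreFt m, hΔK, hsplit m,
            mul_smul_comm, smul_mul_assoc, mul_assoc]
        · rw [if_neg hne, add_zero]
          exact keyterm j m (E j) (Complex.I • (K m * F m))
            (hKE j) (fun i hi => cKE i j hi)
            (site_aKFt (F m) (K m) (hKF m)) (fun i hi => cKFt i m hi)
            (cFtE m j hne) (cWE j j) (cWFt j m)
      rw [Finset.sum_congr rfl (fun m _ => hterm m), Finset.sum_add_distrib,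
        Finset.sum_ite_eq' Finset.univ j]
      simp
    · rw [if_neg (show ¬((⟨1, hv⟩ : Fin 2) = 0) by simp [Fin.ext_iff]), add_zero, hα1b j hv, hFtsum, Finset.sum_mul, Finset.mul_sum]
      exact Finset.sum_congr rfl (fun m _ => keyterm j m
        (Complex.I • (K j * F j)) (Complex.I • (K m * F m))
        (site_aKFt (F j) (K j) (hKF j)) (fun i hi => cKFt i j hi)
        (site_aKFt (F m) (K m) (hKF m)) (fun i hi => cKFt i m hi)
        (cFtFt m j) (cWFt j j) (cWFt j m))
  -- passage to the differences β
  have hβK : ∀ (k : Fin (n-1)) (ν : Fin 2), ΔK * β k ν + β k ν * ΔK = 0 := by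
    intro k ν
    rw [hβ k ν, mul_sub, sub_mul, hKαν _ ν, hKαν _ ν]
    abel
  have hKβ : ∀ (k : Fin (n-1)) (ν : Fin 2), ΔK * β k ν = -(β k ν * ΔK) := by
    intro k ν
    have h := hβK k ν
    rw [add_eq_zero_iff_eq_neg] at h
    exact h
  have hβE : ∀ (k : Fin (n-1)) (ν : Fin 2), ΔE * β k ν = β k ν * ΔE := by
    intro k ν
    rw [hβ k ν, mul_sub, sub_mul, hEαν _ ν, hEαν _ ν]
    abel
  have hβFt : ∀ (k : Fin (n-1)) (ν : Fin 2), ΔFt * β k ν = β k ν * ΔFt := by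
    intro k ν
    rw [hβ k ν, mul_sub, sub_mul, hFtαν _ ν, hFtαν _ ν]
    abel
  have hKiβ : ∀ (k : Fin (n-1)) (ν : Fin 2), ΔKinv * β k ν = -(β k ν * ΔKinv) := by
    intro k ν
    have hb : β k ν * ΔK = -(ΔK * β k ν) := by
      have h := hβK k ν
      rw [add_comm, add_eq_zero_iff_eq_neg] at h
      exact h
    calc ΔKinv * β k ν = ΔKinv * β k ν * (ΔK * ΔKinv) := by rw [hΔKinv.1, mul_one]
      _ = ΔKinv * (β k ν * ΔK) * ΔKinv := by noncomm_ring
      _ = ΔKinv * (-(ΔK * β k ν)) * ΔKinv := by rw [hb]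
      _ = -((ΔKinv * ΔK) * (β k ν * ΔKinv)) := by noncomm_ring
      _ = -(β k ν * ΔKinv) := by rw [hΔKinv.2, one_mul]
  have hFexp : ΔKinv * ΔFt = Complex.I • ΔF := by
    rw [hΔFt, mul_smul_comm, ← mul_assoc, hΔKinv.2, one_mul]
  have hβF : ∀ (k : Fin (n-1)) (ν : Fin 2), ΔF * β k ν = -(β k ν * ΔF) := by
    intro k ν
    have hFrec : ΔF = (-Complex.I) • (ΔKinv * ΔFt) := by
      rw [hFexp, smul_smul,
        show (-Complex.I) * Complex.I = 1 by rw [neg_mul, Complex.I_mul_I, neg_neg],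
        one_smul]
    calc ΔF * β k ν = ((-Complex.I) • (ΔKinv * ΔFt)) * β k ν := by rw [← hFrec]
      _ = (-Complex.I) • (ΔKinv * (ΔFt * β k ν)) := by rw [smul_mul_assoc, mul_assoc]
      _ = (-Complex.I) • (ΔKinv * (β k ν * ΔFt)) := by rw [hβFt k ν]
      _ = (-Complex.I) • ((ΔKinv * β k ν) * ΔFt) := by rw [← mul_assoc]
      _ = (-Complex.I) • ((-(β k ν * ΔKinv)) * ΔFt) := by rw [hKiβ k ν]
      _ = Complex.I • (β k ν * (ΔKinv * ΔFt)) := by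
          rw [neg_mul, smul_neg, neg_smul, neg_neg, mul_assoc]
      _ = Complex.I • (β k ν * (Complex.I • ΔF)) := by rw [hFexp]
      _ = (Complex.I * Complex.I) • (β k ν * ΔF) := by rw [mul_smul_comm, smul_smul]
      _ = -(β k ν * ΔF) := by rw [Complex.I_mul_I, neg_one_smul]
  have hβΩ : ∀ (k : Fin (n-1)) (ν : Fin 2), ΔΩ * β k ν + β k ν * ΔΩ = 0 := by
    intro k ν
    have h1 : (ΔE * ΔF) * β k ν = -(β k ν * (ΔE * ΔF)) := by
      calc (ΔE * ΔF) * β k ν = ΔE * (ΔF * β k ν) := by rw [mul_assoc]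
        _ = ΔE * (-(β k ν * ΔF)) := by rw [hβF k ν]
        _ = -((ΔE * β k ν) * ΔF) := by noncomm_ring
        _ = -((β k ν * ΔE) * ΔF) := by rw [hβE k ν]
        _ = -(β k ν * (ΔE * ΔF)) := by rw [mul_assoc]
    rw [hΔΩ]
    simp only [add_mul, sub_mul, mul_add, mul_sub, smul_mul_assoc, mul_smul_comm,
      h1, hKβ k ν, hKiβ k ν]
    module
  exact fun k ν => ⟨hβK k ν, hβE k ν, hβFt k ν, hβΩ k ν⟩
end

section
/- Let κ, ε ∈ ℂ∖{0}, φ, ω ∈ ℂ, and s ∈ ℂ with s² = κ and ω² = κ + κ⁻¹ − εφ − 2. Define the 2×2 complex matrices K = [[s, 0], [0, −s]], E = [[0, ε], [1, 0]], F = [[0, −i(ω + s − s⁻¹)], [−i(ω − s + s⁻¹)/ε, 0]]. Then (K, E, F) is a U-triple (KE = −EK, KF = −FK, EF − FE = 2i(K − K⁻¹)), and the central elements act by scalars: K² = κ·I, E² = ε·I, F² = φ·I, and iEF + K − K⁻¹ = ω·I. In particular these matrices define a 2-dimensional representation of U_i(sl₂) on which the Casimir Ω acts by the scalar ω. -/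
/-- The explicit 2-dimensional simple weight modules of `U_i(sl₂)`: for `κ, ε ≠ 0`,
`s² = κ` and `ω² = κ + κ⁻¹ − εφ − 2`, the matrices
`K = [[s,0],[0,−s]]`, `E = [[0,ε],[1,0]]`,
`F = [[0, −i(ω+s−s⁻¹)],[−i(ω−s+s⁻¹)/ε, 0]]` form a U-triple, and the central elements
act by scalars: `K² = κ·I`, `E² = ε·I`, `F² = φ·I`, and the Casimir
`iEF + K − K⁻¹ = ω·I`. -/
theorem stmt12 (κ ε φ ω s : ℂ) (hκ : κ ≠ 0) (hε : ε ≠ 0)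
    (hs : s ^ 2 = κ) (hω : ω ^ 2 = κ + κ⁻¹ - ε * φ - 2)
    (K E F : Matrix (Fin 2) (Fin 2) ℂ)
    (hK : K = !![s, 0; 0, -s])
    (hE : E = !![0, ε; 1, 0])
    (hF : F = !![0, -Complex.I * (ω + s - s⁻¹); -Complex.I * (ω - s + s⁻¹) / ε, 0]) :
    K * E = -(E * K) ∧
    K * F = -(F * K) ∧
    E * F - F * E = (2 * Complex.I) • (K - K⁻¹) ∧
    K ^ 2 = κ • (1 : Matrix (Fin 2) (Fin 2) ℂ) ∧
    E ^ 2 = ε • (1 : Matrix (Fin 2) (Fin 2) ℂ) ∧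
    F ^ 2 = φ • (1 : Matrix (Fin 2) (Fin 2) ℂ) ∧
    Complex.I • (E * F) + K - K⁻¹ = ω • (1 : Matrix (Fin 2) (Fin 2) ℂ) := by
  have hs0 : s ≠ 0 := by
    intro h; apply hκ; rw [← hs, h]; ring
  have hκinv : κ⁻¹ = s⁻¹ ^ 2 := by rw [← hs, inv_pow]
  have hKinv : K⁻¹ = !![s⁻¹, 0; 0, -s⁻¹] := by
    apply Matrix.inv_eq_right_inv
    rw [hK]
    ext i j
    fin_cases i <;> fin_cases j <;>
      simp [Matrix.mul_apply, Fin.sum_univ_two, Matrix.one_apply] <;> field_simp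
  subst hK hE hF
  rw [hKinv, hκinv] at *
  have hinv : κ⁻¹ * s ^ 2 = 1 := by rw [hs]; exact inv_mul_cancel₀ hκ
  refine ⟨?_, ?_, ?_, ?_, ?_, ?_, ?_⟩ <;>
    ext i j <;> fin_cases i <;> fin_cases j <;>
    simp [Matrix.mul_apply, Fin.sum_univ_two, pow_two, Matrix.smul_apply,
      Matrix.one_apply, Matrix.sub_apply, Matrix.add_apply, Matrix.neg_apply]
  all_goals try field_simp
  all_goals ring_nf
  all_goals try simp only [Complex.I_sq]
  all_goals try ring_nf
  all_goals first
    | rfl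
    | exact hs
    | linear_combination (-(s ^ 2)) * hω + s ^ 2 * hs - hinv
end

section
/- Define the 4×4 complex matrices K = diag(1, −1, −1, 1), E with E·e₁ = e₂, E·e₃ = e₄ and E·e₂ = E·e₄ = 0, and F with F·e₁ = −i·e₃, F·e₂ = −i·e₄ and F·e₃ = F·e₄ = 0 (where e₁, …, e₄ is the standard basis). Then (K, E, F) is a U-triple (KE = −EK, KF = −FK, EF − FE = 2i(K − K⁻¹)); moreover K² = I, E² = 0, F² = 0, and the Casimir Ω := iEF + K − K⁻¹ satisfies Ω ≠ 0 and Ω² = 0. In particular Ω does not act diagonalizably, so this 4-dimensional representation P₀ of U_i(sl₂) is indecomposable but not irreducible. -/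
set_option maxHeartbeats 2000000 in
/-- The 4-dimensional module `P₀` of `U_i(sl₂)` (projective cover of the trivial module):
with `K = diag(1,−1,−1,1)`, `E` sending `e₁ ↦ e₂, e₃ ↦ e₄, e₂, e₄ ↦ 0`, and `F` sending
`e₁ ↦ −i·e₃, e₂ ↦ −i·e₄, e₃, e₄ ↦ 0`, the triple `(K, E, F)` is a U-triple, `K² = I`,
`E² = 0`, `F² = 0`, and the Casimir `Ω = iEF + K − K⁻¹` satisfies `Ω ≠ 0` and `Ω² = 0`
(so `Ω` does not act diagonalizably and `P₀` is indecomposable but not irreducible). -/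
theorem stmt13 (K E F Ω : Matrix (Fin 4) (Fin 4) ℂ)
    (hK : K = !![1, 0, 0, 0; 0, -1, 0, 0; 0, 0, -1, 0; 0, 0, 0, 1])
    (hE : E = !![0, 0, 0, 0; 1, 0, 0, 0; 0, 0, 0, 0; 0, 0, 1, 0])
    (hF : F = !![0, 0, 0, 0; 0, 0, 0, 0; -Complex.I, 0, 0, 0; 0, -Complex.I, 0, 0])
    (hΩ : Ω = Complex.I • (E * F) + K - K⁻¹) :
    K * E = -(E * K) ∧
    K * F = -(F * K) ∧
    E * F - F * E = (2 * Complex.I) • (K - K⁻¹) ∧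
    K ^ 2 = 1 ∧
    E ^ 2 = 0 ∧
    F ^ 2 = 0 ∧
    Ω ≠ 0 ∧
    Ω ^ 2 = 0 := by
  have hKK : K * K = 1 := by
    subst hK
    ext i j
    fin_cases i <;> fin_cases j <;>
      simp [Matrix.mul_apply, Fin.sum_univ_four, Matrix.one_apply,
        Matrix.vecHead, Matrix.vecTail]
  have hKinv : K⁻¹ = K := Matrix.inv_eq_left_inv hKK
  have hΩval : Ω = !![0, 0, 0, 0; 0, 0, 0, 0; 0, 0, 0, 0; 1, 0, 0, 0] := by
    rw [hΩ, hKinv, hE, hF]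
    ext i j
    fin_cases i <;> fin_cases j <;>
      simp [Matrix.mul_apply, Fin.sum_univ_four, Matrix.vecHead, Matrix.vecTail,
        Complex.I_mul_I]
  refine ⟨?_, ?_, ?_, ?_, ?_, ?_, ?_, ?_⟩
  · rw [hK, hE]; ext i j
    fin_cases i <;> fin_cases j <;>
      simp [Matrix.mul_apply, Fin.sum_univ_four, Matrix.vecHead, Matrix.vecTail]
  · rw [hK, hF]; ext i j
    fin_cases i <;> fin_cases j <;>
      simp [Matrix.mul_apply, Fin.sum_univ_four, Matrix.vecHead, Matrix.vecTail]
  · rw [hKinv, hE, hF]; ext i j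
    fin_cases i <;> fin_cases j <;>
      simp [Matrix.mul_apply, Fin.sum_univ_four, Matrix.vecHead, Matrix.vecTail]
  · rw [pow_two]; exact hKK
  · rw [hE, pow_two]; ext i j
    fin_cases i <;> fin_cases j <;>
      simp [Matrix.mul_apply, Fin.sum_univ_four, Matrix.vecHead, Matrix.vecTail]
  · rw [hF, pow_two]; ext i j
    fin_cases i <;> fin_cases j <;>
      simp [Matrix.mul_apply, Fin.sum_univ_four, Matrix.vecHead, Matrix.vecTail]
  · rw [hΩval]
    intro h
    have := congrFun (congrFun h 3) 0
    simp [Matrix.vecHead, Matrix.vecTail] at this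
  · rw [hΩval, pow_two]
    ext i j
    fin_cases i <;> fin_cases j <;>
      simp [Matrix.mul_apply, Fin.sum_univ_four, Matrix.vecHead, Matrix.vecTail]
end

section
/- Let (K, E, F) be a U-triple in an associative unital ℂ-algebra A, and let Φ : A ⊗_ℂ A → A ⊗_ℂ A be a unital ℂ-algebra homomorphism satisfying Φ(E⊗1) = K⊗E, Φ(1⊗F) = F⊗K⁻¹, Φ(K⊗1) = 1⊗K − i·(KF)⊗E, and Φ(K⊗K) = K⊗K. Then: (1) Φ(E²⊗1) = K²⊗E²; (2) Φ(1⊗F²) = F²⊗K⁻²; (3) Φ(K²⊗1) = 1⊗K² + (K²F²)⊗E²; and (4) Φ(1⊗K²) · (1⊗K² + (K²F²)⊗E²) = K²⊗K². These are the formulas for the action of the braiding automorphism Ř of U_i(sl₂)⊗U_i(sl₂) on the central subalgebra Z₀⊗Z₀. -/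
open scoped TensorProduct

/-- Action of the braiding automorphism `Ř` of `U_i(sl₂) ⊗ U_i(sl₂)` on the central
subalgebra `Z₀ ⊗ Z₀`: if `(K, E, F)` is a U-triple in `A` and
`Φ : A ⊗[ℂ] A → A ⊗[ℂ] A` is a unital ℂ-algebra map with `Φ(E⊗1) = K⊗E`,
`Φ(1⊗F) = F⊗K⁻¹`, `Φ(K⊗1) = 1⊗K − i(KF)⊗E`, `Φ(K⊗K) = K⊗K`, then
`Φ(E²⊗1) = K²⊗E²`, `Φ(1⊗F²) = F²⊗K⁻²`, `Φ(K²⊗1) = 1⊗K² + (K²F²)⊗E²`, and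
`Φ(1⊗K²)·(1⊗K² + (K²F²)⊗E²) = K²⊗K²`. -/
theorem stmt18 {A : Type*} [Ring A] [Algebra ℂ A] (K Kinv E F : A)
    (hK1 : K * Kinv = 1) (hK2 : Kinv * K = 1)
    (hKE : K * E = -(E * K)) (hKF : K * F = -(F * K))
    (hEF : E * F - F * E = (2 * Complex.I) • (K - Kinv))
    (Φ : A ⊗[ℂ] A →ₐ[ℂ] A ⊗[ℂ] A)
    (hΦ1 : Φ (E ⊗ₜ 1) = K ⊗ₜ E)
    (hΦ2 : Φ (1 ⊗ₜ F) = F ⊗ₜ Kinv)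
    (hΦ3 : Φ (K ⊗ₜ 1) = 1 ⊗ₜ K - Complex.I • ((K * F) ⊗ₜ E))
    (hΦ4 : Φ (K ⊗ₜ K) = K ⊗ₜ K) :
    Φ ((E ^ 2) ⊗ₜ 1) = (K ^ 2) ⊗ₜ (E ^ 2) ∧
    Φ (1 ⊗ₜ (F ^ 2)) = (F ^ 2) ⊗ₜ (Kinv ^ 2) ∧
    Φ ((K ^ 2) ⊗ₜ 1) = 1 ⊗ₜ (K ^ 2) + (K ^ 2 * F ^ 2) ⊗ₜ (E ^ 2) ∧
    Φ (1 ⊗ₜ (K ^ 2)) * (1 ⊗ₜ (K ^ 2) + (K ^ 2 * F ^ 2) ⊗ₜ (E ^ 2)) = (K ^ 2) ⊗ₜ (K ^ 2) := by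
  have h1 : Φ ((E ^ 2) ⊗ₜ (1:A)) = (K ^ 2) ⊗ₜ (E ^ 2) := by
    have : (E ^ 2) ⊗ₜ[ℂ] (1:A) = (E ⊗ₜ 1) * (E ⊗ₜ 1) := by
      rw [Algebra.TensorProduct.tmul_mul_tmul, one_mul, sq]
    rw [this, map_mul, hΦ1, Algebra.TensorProduct.tmul_mul_tmul, ← sq, ← sq]
  have h2 : Φ ((1:A) ⊗ₜ (F ^ 2)) = (F ^ 2) ⊗ₜ (Kinv ^ 2) := by
    have : (1:A) ⊗ₜ[ℂ] (F ^ 2) = (1 ⊗ₜ F) * (1 ⊗ₜ F) := by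
      rw [Algebra.TensorProduct.tmul_mul_tmul, one_mul, sq]
    rw [this, map_mul, hΦ2, Algebra.TensorProduct.tmul_mul_tmul, ← sq, ← sq]
  have hFK : F * K = -(K * F) := by rw [hKF, neg_neg]
  have hKFKF : (K * F) * (K * F) = -(K ^ 2 * F ^ 2) := by
    have : (K * F) * (K * F) = K * (F * K) * F := by noncomm_ring
    rw [this, hFK]; noncomm_ring
  have h3 : Φ ((K ^ 2) ⊗ₜ (1:A)) = 1 ⊗ₜ (K ^ 2) + (K ^ 2 * F ^ 2) ⊗ₜ (E ^ 2) := by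
    have hK21 : (K ^ 2) ⊗ₜ[ℂ] (1:A) = (K ⊗ₜ 1) * (K ⊗ₜ 1) := by
      rw [Algebra.TensorProduct.tmul_mul_tmul, one_mul, sq]
    rw [hK21, map_mul, hΦ3, sub_mul, mul_sub, mul_sub]
    simp only [smul_mul_assoc, mul_smul_comm, smul_smul,
      Algebra.TensorProduct.tmul_mul_tmul, one_mul, mul_one, Complex.I_mul_I,
      hKE, hKFKF, TensorProduct.tmul_neg, TensorProduct.neg_tmul, smul_neg, neg_smul,
      neg_neg, one_smul, ← sq]
    have e1 : ((1:A) ⊗ₜ[ℂ] K) ^ 2 = (1:A) ⊗ₜ[ℂ] (K ^ 2) := by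
      rw [sq, Algebra.TensorProduct.tmul_mul_tmul, one_mul, ← sq]
    have e2 : (Complex.I • ((K * F) ⊗ₜ[ℂ] E)) ^ 2 = (K ^ 2 * F ^ 2) ⊗ₜ[ℂ] (E ^ 2) := by
      rw [smul_pow, Complex.I_sq, sq, Algebra.TensorProduct.tmul_mul_tmul, hKFKF]
      simp only [neg_smul, one_smul, TensorProduct.neg_tmul, neg_neg, ← sq]
    rw [← e1, ← e2]
    abel
  have h4 : Φ ((1:A) ⊗ₜ (K ^ 2)) * (1 ⊗ₜ (K ^ 2) + (K ^ 2 * F ^ 2) ⊗ₜ (E ^ 2))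
      = (K ^ 2) ⊗ₜ (K ^ 2) := by
    rw [← h3, ← map_mul]
    have : ((1:A) ⊗ₜ[ℂ] (K ^ 2)) * ((K ^ 2) ⊗ₜ (1:A)) = (K ⊗ₜ K) * (K ⊗ₜ K) := by
      simp [Algebra.TensorProduct.tmul_mul_tmul, sq]
    rw [this, map_mul, hΦ4, Algebra.TensorProduct.tmul_mul_tmul, ← sq]
  exact ⟨h1, h2, h3, h4⟩
end
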